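/- arXiv:math/9209217 — 5 statements merged into one kernel-verified Lean document; each statement's English description precedes it below -/
import Mathlib

section
/- Let F: [0,∞) → [0,∞) be a strictly increasing continuous convex function with F(0) = 0 satisfying the Δ₂-condition. Write F_t(x) = F(tx)/F(t). If there exists a constant C > 1 such that for all 0 < x ≤ 1, limsup_{t→∞} F_t(x) ≤ C · liminf_{t→∞} F_t(x), then for every x₀ ∈ (0,1] there exist a constant C' (depending only on C and the Δ₂ constant) and t₀ < ∞ such that for all t ≥ t₀ and x₀ ≤ x ≤ 1, C'⁻¹ x^p ≤ F_t(x) ≤ C' x^p for some fixed 1 ≤ p < ∞. -/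
/-!
Convexity and the Δ₂-condition give `Δ⁻ⁿ ≤ F_t(2⁻ⁿ) ≤ 2⁻ⁿ` for large `t`, and the identity
`F_t(xy) = F_t(x) F_{tx}(y)` makes `uₙ = limsup_t F_t(2⁻ⁿ)` submultiplicative and
`lₙ = liminf_t F_t(2⁻ⁿ)` supermultiplicative. Together with `lₙ ≤ uₙ ≤ C lₙ` this makes `-log uₙ`
additive up to the error `2 log C`, so Fekete's lemma yields `λ` with `uₙ` within a factor `C²`
of `e^{-λn} = (2⁻ⁿ)ᵖ`, `p = λ / log 2`; and `p ≥ 1` because `u₁ ≤ 1/2`. For large `t`, `F_t` is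
within a factor `2` of these bounds at the finitely many dyadic points of `[x₀, 1]`, and
monotonicity of `F_t` interpolates between consecutive ones at the cost of a factor `2ᵖ`.
-/

open Filter Function Set

/-- `F_t(x) = F(tx)/F(t)`. -/
noncomputable def Ft (F : ℝ → ℝ) (t x : ℝ) : ℝ := F (t * x) / F t

open Topology

theorem exists_mul_sub_le_and_le_mul_of_superadditive {h : ℕ → ℝ} {D : ℝ}
    (hsuper : ∀ m n, h m + h n ≤ h (m + n)) (hsub : ∀ m n, h (m + n) ≤ h m + h n + D)
    (hbdd : BddAbove (range fun n => h n / n)) :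
    ∃ lam : ℝ, ∀ n : ℕ, lam * n - D ≤ h n ∧ h n ≤ lam * n := by
  have hneg : Subadditive (-h) := fun m n => by simp only [Pi.neg_apply]; linarith [hsuper m n]
  have hshift : Subadditive (h · + D) := fun m n => by linarith [hsub m n]
  have hneg_bdd : BddBelow (range fun n => (-h) n / n) := by
    obtain ⟨B, hB⟩ := hbdd
    refine ⟨-B, forall_mem_range.2 fun n => ?_⟩
    rw [Pi.neg_apply, neg_div, neg_le_neg_iff]
    exact hB (mem_range_self n)
  -- The Fekete limits of `-h` and `h + D` are opposite, as the quotients differ by `D / n`.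
  have hlim_shift : Tendsto (fun n : ℕ => (h n + D) / n) atTop (𝓝 (-hneg.lim)) := by
    have := (hneg.tendsto_lim hneg_bdd).neg.add (tendsto_const_div_atTop_nhds_zero_nat D)
    simpa only [Pi.neg_apply, neg_div, neg_neg, add_zero, add_div] using this
  have hshift_bdd := hlim_shift.bddBelow_range
  have hlim_eq : hshift.lim = -hneg.lim :=
    tendsto_nhds_unique (hshift.tendsto_lim hshift_bdd) hlim_shift
  refine ⟨-hneg.lim, fun n => ?_⟩
  rcases eq_or_ne n 0 with rfl | hn
  · simp only [CharP.cast_eq_zero, mul_zero, zero_sub]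
    constructor <;> linarith [hsuper 0 0, hsub 0 0]
  · have hn' : (0 : ℝ) < n := by positivity
    have hlow := hshift.lim_le_div hshift_bdd hn
    have hup := hneg.lim_le_div hneg_bdd hn
    rw [hlim_eq, le_div_iff₀ hn'] at hlow
    rw [le_div_iff₀ hn', Pi.neg_apply] at hup
    constructor <;> linarith

theorem exists_rpow_le_and_le_mul_rpow_of_submultiplicative {u : ℕ → ℝ} {K c : ℝ}
    (hu : ∀ n, 0 < u n) (hsub : ∀ m n, u (m + n) ≤ u m * u n)
    (hsuper : ∀ m n, u m * u n ≤ K * u (m + n)) (hc : 0 < c) (hcu : ∀ n, c ^ n ≤ u n) :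
    ∃ p : ℝ, ∀ n : ℕ, ((2 : ℝ)⁻¹ ^ n) ^ p ≤ u n ∧ u n ≤ K * ((2 : ℝ)⁻¹ ^ n) ^ p := by
  have hK : 0 < K :=
    pos_of_mul_pos_left ((mul_pos (hu 0) (hu 0)).trans_le (hsuper 0 0)) (hu 0).le
  have hlog_mul : ∀ m n, Real.log (u m * u n) = Real.log (u m) + Real.log (u n) := fun m n =>
    Real.log_mul (hu m).ne' (hu n).ne'
  obtain ⟨lam, hlam⟩ := exists_mul_sub_le_and_le_mul_of_superadditive
    (h := fun n => -Real.log (u n)) (D := Real.log K)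
    (fun m n => by
      have := Real.log_le_log (hu _) (hsub m n)
      linarith [hlog_mul m n])
    (fun m n => by
      have := Real.log_le_log (mul_pos (hu m) (hu n)) (hsuper m n)
      rw [Real.log_mul hK.ne' (hu _).ne'] at this
      linarith [hlog_mul m n])
    ⟨max (-Real.log c) 0, forall_mem_range.2 fun n => by
      rcases eq_or_ne n 0 with rfl | hn
      · simp
      · have := Real.log_le_log (pow_pos hc n) (hcu n)
        rw [Real.log_pow] at this
        rw [div_le_iff₀ (by positivity)]
        nlinarith [le_max_left (-Real.log c) 0]⟩
  refine ⟨lam / Real.log 2, fun n => ?_⟩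
  have hdyadic : ((2 : ℝ)⁻¹ ^ n) ^ (lam / Real.log 2) = Real.exp (-(lam * n)) := by
    rw [Real.rpow_def_of_pos (by positivity), Real.log_pow, Real.log_inv]
    field_simp
  rw [hdyadic]
  constructor
  · rw [← Real.exp_log (hu n), Real.exp_le_exp]
    linarith [(hlam n).2]
  · rw [← Real.log_le_log_iff (hu n) (by positivity), Real.log_mul hK.ne' (by positivity),
      Real.log_exp]
    linarith [(hlam n).1]

theorem eventually_le_and_le_of_limsup_le_mul_liminf {α : Type*} {l : Filter α} {f : α → ℝ}
    {C X : ℝ} (hC : 1 ≤ C) (hX : 0 < X) (hf : IsBoundedUnder (· ≤ ·) l f)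
    (hf' : IsBoundedUnder (· ≥ ·) l f) (hcmp : limsup f l ≤ C * liminf f l)
    (hlow : X ≤ limsup f l) (hup : limsup f l ≤ C ^ 2 * X) :
    ∀ᶠ a in l, (2 * C ^ 2)⁻¹ * X ≤ f a ∧ f a ≤ 2 * C ^ 2 * X := by
  have hC0 : 0 < C := zero_lt_one.trans_le hC
  have hlim_low : (2 * C ^ 2)⁻¹ * X < liminf f l := by
    rw [← div_le_iff₀' hC0] at hcmp
    refine lt_of_lt_of_le ?_ ((div_le_div_of_nonneg_right hlow hC0.le).trans hcmp)
    rw [inv_mul_eq_div, div_lt_div_iff₀ (by positivity) hC0]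
    nlinarith
  have hlim_up : limsup f l < 2 * C ^ 2 * X := by nlinarith
  filter_upwards [eventually_lt_of_lt_liminf hlim_low hf', eventually_lt_of_limsup_lt hlim_up hf]
    with a hlow hup
  exact ⟨hlow.le, hup.le⟩

theorem two_inv_pow_mem_Ioc (n : ℕ) : (2⁻¹ : ℝ) ^ n ∈ Ioc 0 1 :=
  ⟨by positivity, pow_le_one₀ (by norm_num) (by norm_num)⟩

theorem inv_mul_rpow_le_and_le_mul_rpow_of_two_inv_pow {φ : ℝ → ℝ} {p K : ℝ} {N : ℕ}
    (hφ : MonotoneOn φ (Ioi 0)) (hp : 0 ≤ p) (hK : 0 < K)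
    (hdyadic : ∀ n ≤ N + 1, K⁻¹ * ((2 : ℝ)⁻¹ ^ n) ^ p ≤ φ (2⁻¹ ^ n) ∧
      φ (2⁻¹ ^ n) ≤ K * ((2 : ℝ)⁻¹ ^ n) ^ p)
    {x : ℝ} (hx : x ∈ Icc ((2 : ℝ)⁻¹ ^ N) 1) :
    (2 ^ p * K)⁻¹ * x ^ p ≤ φ x ∧ φ x ≤ 2 ^ p * K * x ^ p := by
  have hx0 : 0 < x := (two_inv_pow_mem_Ioc N).1.trans_le hx.1
  obtain ⟨i, hi_lt, hi_le⟩ :=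
    exists_nat_pow_near_of_lt_one hx0 hx.2 (by norm_num : (0 : ℝ) < 2⁻¹) (by norm_num)
  have hiN : i ≤ N :=
    (pow_le_pow_iff_right_of_lt_one₀ (by norm_num) (by norm_num)).1 (hx.1.trans hi_le)
  have hstep : ((2 : ℝ)⁻¹ ^ i) ^ p = 2 ^ p * ((2 : ℝ)⁻¹ ^ (i + 1)) ^ p := by
    rw [← Real.mul_rpow (by norm_num) (by positivity), pow_succ, mul_left_comm,
      mul_inv_cancel₀ two_ne_zero, mul_one]
  constructor
  · calc (2 ^ p * K)⁻¹ * x ^ p ≤ (2 ^ p * K)⁻¹ * ((2 : ℝ)⁻¹ ^ i) ^ p := by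
          gcongr
      _ = K⁻¹ * ((2 : ℝ)⁻¹ ^ (i + 1)) ^ p := by
          rw [hstep]; field_simp
      _ ≤ φ (2⁻¹ ^ (i + 1)) := (hdyadic (i + 1) (by omega)).1
      _ ≤ φ x := hφ (two_inv_pow_mem_Ioc _).1 hx0 hi_lt.le
  · calc φ x ≤ φ (2⁻¹ ^ i) := hφ hx0 (two_inv_pow_mem_Ioc _).1 hi_le
      _ ≤ K * ((2 : ℝ)⁻¹ ^ i) ^ p := (hdyadic i (by omega)).2
      _ = 2 ^ p * K * ((2 : ℝ)⁻¹ ^ (i + 1)) ^ p := by rw [hstep]; ring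
      _ ≤ 2 ^ p * K * x ^ p := by gcongr

theorem limsup_comp_mul_const (f : ℝ → ℝ) {x : ℝ} (hx : 0 < x) :
    limsup (fun t => f (t * x)) atTop = limsup f atTop := by
  rw [← comp_def, limsup_comp]
  exact congrArg _ (OrderIso.mulRight₀ x hx).map_atTop

theorem liminf_comp_mul_const (f : ℝ → ℝ) {x : ℝ} (hx : 0 < x) :
    liminf (fun t => f (t * x)) atTop = liminf f atTop := by
  rw [← comp_def, liminf_comp]
  exact congrArg _ (OrderIso.mulRight₀ x hx).map_atTop

theorem le_pow_mul_apply_mul_two_inv_pow {F : ℝ → ℝ} {Δ : ℝ}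
    (hΔ : ∀ x ≥ (0 : ℝ), F (2 * x) ≤ Δ * F x) (hΔ0 : 0 ≤ Δ) {t : ℝ} (ht : 0 ≤ t) (n : ℕ) :
    F t ≤ Δ ^ n * F (t * 2⁻¹ ^ n) := by
  induction n with
  | zero => simp
  | succ n ih =>
    have hhalf : 2 * (t * 2⁻¹ ^ (n + 1)) = t * 2⁻¹ ^ n := by rw [pow_succ]; ring
    calc F t ≤ Δ ^ n * F (2 * (t * 2⁻¹ ^ (n + 1))) := hhalf ▸ ih
      _ ≤ Δ ^ n * (Δ * F (t * 2⁻¹ ^ (n + 1))) := by gcongr; exact hΔ _ (by positivity)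
      _ = Δ ^ (n + 1) * F (t * 2⁻¹ ^ (n + 1)) := by ring

theorem Ft_mul {F : ℝ → ℝ} {t x : ℝ} (y : ℝ) (hx : F (t * x) ≠ 0) :
    Ft F t (x * y) = Ft F t x * Ft F (t * x) y := by
  rw [Ft, Ft, Ft, ← mul_assoc, div_mul_div_comm, mul_comm (F t), mul_div_mul_left _ _ hx]

theorem Ft_le_self {F : ℝ → ℝ} (hF0 : F 0 = 0) (hconv : ConvexOn ℝ (Ici 0) F) {t x : ℝ}
    (ht : 0 ≤ t) (hFt : 0 < F t) (hx : x ∈ Icc 0 1) : Ft F t x ≤ x := by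
  have h := hconv.2 (mem_Ici.2 ht) self_mem_Ici hx.1 (sub_nonneg.2 hx.2) (by ring)
  simp only [smul_eq_mul, mul_zero, add_zero, hF0] at h
  rwa [Ft, div_le_iff₀ hFt, mul_comm t]

section StrictMonoOn

variable {F : ℝ → ℝ} (hF0 : F 0 = 0) (hmono : StrictMonoOn F (Ici 0))
include hF0 hmono

theorem pos_of_strictMonoOn {t : ℝ} (ht : 0 < t) : 0 < F t :=
  hF0 ▸ hmono self_mem_Ici ht.le ht

theorem Ft_mem_Icc {t x : ℝ} (ht : 0 < t) (hx : x ∈ Icc 0 1) : Ft F t x ∈ Icc 0 1 := by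
  have hFt := pos_of_strictMonoOn hF0 hmono ht
  have htx : 0 ≤ t * x := mul_nonneg ht.le hx.1
  refine ⟨div_nonneg ?_ hFt.le, (div_le_one hFt).2 ?_⟩
  · exact hF0 ▸ hmono.monotoneOn self_mem_Ici htx htx
  · exact hmono.monotoneOn htx ht.le (mul_le_of_le_one_right ht.le hx.2)

theorem Ft_mono {t x y : ℝ} (ht : 0 < t) (hx : 0 ≤ x) (hxy : x ≤ y) : Ft F t x ≤ Ft F t y :=
  div_le_div_of_nonneg_right
    (hmono.monotoneOn (mul_nonneg ht.le hx) (mul_nonneg ht.le (hx.trans hxy))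
      (mul_le_mul_of_nonneg_left hxy ht.le))
    (pos_of_strictMonoOn hF0 hmono ht).le

theorem eventually_Ft_mem_Icc {x : ℝ} (hx : x ∈ Icc 0 1) :
    ∀ᶠ t in atTop, Ft F t x ∈ Icc 0 1 :=
  (eventually_gt_atTop 0).mono fun _ ht => Ft_mem_Icc hF0 hmono ht hx

theorem eventually_Ft_comp_mul_mem_Icc {x y : ℝ} (hx : 0 < x) (hy : y ∈ Icc 0 1) :
    ∀ᶠ t in atTop, Ft F (t * x) y ∈ Icc 0 1 :=
  (tendsto_id.atTop_mul_const hx).eventually (eventually_Ft_mem_Icc hF0 hmono hy)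

theorem eventually_Ft_mul {x : ℝ} (y : ℝ) (hx : 0 < x) :
    ∀ᶠ t in atTop, Ft F t (x * y) = Ft F t x * Ft F (t * x) y :=
  (eventually_gt_atTop 0).mono fun _ ht =>
    Ft_mul y (pos_of_strictMonoOn hF0 hmono (mul_pos ht hx)).ne'

theorem limsup_Ft_mul_le {x y : ℝ} (hx : x ∈ Ioc 0 1) (hy : y ∈ Icc 0 1) :
    limsup (Ft F · (x * y)) atTop ≤ limsup (Ft F · x) atTop * limsup (Ft F · y) atTop := by
  have hFx := eventually_Ft_mem_Icc hF0 hmono (Ioc_subset_Icc_self hx)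
  have hFy := eventually_Ft_comp_mul_mem_Icc hF0 hmono hx.1 hy
  rw [limsup_congr (eventually_Ft_mul hF0 hmono y hx.1), ← limsup_comp_mul_const (Ft F · y) hx.1]
  exact limsup_mul_le (hFx.mono fun _ h => h.1).frequently
    (isBoundedUnder_of_eventually_le (hFx.mono fun _ h => h.2)) (hFy.mono fun _ h => h.1)
    (isBoundedUnder_of_eventually_le (hFy.mono fun _ h => h.2))

theorem liminf_mul_liminf_le_liminf_Ft {x y : ℝ} (hx : x ∈ Ioc 0 1) (hy : y ∈ Icc 0 1) :
    liminf (Ft F · x) atTop * liminf (Ft F · y) atTop ≤ liminf (Ft F · (x * y)) atTop := by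
  have hFx := eventually_Ft_mem_Icc hF0 hmono (Ioc_subset_Icc_self hx)
  have hFy := eventually_Ft_comp_mul_mem_Icc hF0 hmono hx.1 hy
  rw [liminf_congr (eventually_Ft_mul hF0 hmono y hx.1), ← liminf_comp_mul_const (Ft F · y) hx.1]
  exact le_liminf_mul (hFx.mono fun _ h => h.1)
    (isBoundedUnder_of_eventually_le (hFx.mono fun _ h => h.2)) (hFy.mono fun _ h => h.1)
    (isBoundedUnder_of_eventually_le (hFy.mono fun _ h => h.2)).isCoboundedUnder_ge

theorem isBoundedUnder_le_Ft {x : ℝ} (hx : x ∈ Icc 0 1) :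
    IsBoundedUnder (· ≤ ·) atTop (Ft F · x) :=
  isBoundedUnder_of_eventually_le ((eventually_Ft_mem_Icc hF0 hmono hx).mono fun _ h => h.2)

theorem isBoundedUnder_ge_Ft {x : ℝ} (hx : x ∈ Icc 0 1) :
    IsBoundedUnder (· ≥ ·) atTop (Ft F · x) :=
  isBoundedUnder_of_eventually_ge ((eventually_Ft_mem_Icc hF0 hmono hx).mono fun _ h => h.1)

theorem limsup_Ft_le_self (hconv : ConvexOn ℝ (Ici 0) F) {x : ℝ} (hx : x ∈ Icc 0 1) :
    limsup (Ft F · x) atTop ≤ x :=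
  limsup_le_of_le (isBoundedUnder_ge_Ft hF0 hmono hx).isCoboundedUnder_le
    ((eventually_gt_atTop 0).mono fun _ ht =>
      Ft_le_self hF0 hconv ht.le (pos_of_strictMonoOn hF0 hmono ht) hx)

theorem pos_of_apply_two_mul_le {Δ : ℝ} (hΔ : ∀ x ≥ (0 : ℝ), F (2 * x) ≤ Δ * F x) : 0 < Δ := by
  have hF1 := pos_of_strictMonoOn hF0 hmono one_pos
  have hF2 := pos_of_strictMonoOn hF0 hmono two_pos
  have := hΔ 1 zero_le_one
  rw [mul_one] at this
  exact pos_of_mul_pos_left (hF2.trans_le this) hF1.le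

theorem inv_pow_le_liminf_Ft_two_inv_pow {Δ : ℝ} (hΔ : ∀ x ≥ (0 : ℝ), F (2 * x) ≤ Δ * F x)
    (n : ℕ) : Δ⁻¹ ^ n ≤ liminf (Ft F · (2⁻¹ ^ n)) atTop := by
  have hΔ0 := pos_of_apply_two_mul_le hF0 hmono hΔ
  have hmem := Ioc_subset_Icc_self (two_inv_pow_mem_Ioc n)
  refine le_liminf_of_le (isBoundedUnder_le_Ft hF0 hmono hmem).isCoboundedUnder_ge
    ((eventually_gt_atTop 0).mono fun t ht => ?_)
  rw [Ft, le_div_iff₀ (pos_of_strictMonoOn hF0 hmono ht), inv_pow,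
    inv_mul_le_iff₀ (by positivity)]
  exact le_pow_mul_apply_mul_two_inv_pow hΔ hΔ0.le ht.le n

end StrictMonoOn

theorem exists_rpow_le_limsup_Ft_two_inv_pow_le {F : ℝ → ℝ} (hF0 : F 0 = 0)
    (hmono : StrictMonoOn F (Ici 0)) (hconv : ConvexOn ℝ (Ici 0) F) {Δ : ℝ}
    (hΔ : ∀ x ≥ (0 : ℝ), F (2 * x) ≤ Δ * F x) {C : ℝ} (hC : 0 < C)
    (hcmp : ∀ x ∈ Ioc (0 : ℝ) 1,
      limsup (fun t => Ft F t x) atTop ≤ C * liminf (fun t => Ft F t x) atTop) :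
    ∃ p : ℝ, 1 ≤ p ∧ ∀ n : ℕ, ((2 : ℝ)⁻¹ ^ n) ^ p ≤ limsup (Ft F · (2⁻¹ ^ n)) atTop ∧
      limsup (Ft F · (2⁻¹ ^ n)) atTop ≤ C ^ 2 * ((2 : ℝ)⁻¹ ^ n) ^ p := by
  set u : ℕ → ℝ := fun n => limsup (Ft F · (2⁻¹ ^ n)) atTop
  set l : ℕ → ℝ := fun n => liminf (Ft F · (2⁻¹ ^ n)) atTop
  have hmem n := Ioc_subset_Icc_self (two_inv_pow_mem_Ioc n)
  have hl n : Δ⁻¹ ^ n ≤ l n := inv_pow_le_liminf_Ft_two_inv_pow hF0 hmono hΔ n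
  have hlu n : l n ≤ u n :=
    liminf_le_limsup (isBoundedUnder_le_Ft hF0 hmono (hmem n))
      (isBoundedUnder_ge_Ft hF0 hmono (hmem n))
  have hΔ0 : 0 < Δ⁻¹ := inv_pos.2 (pos_of_apply_two_mul_le hF0 hmono hΔ)
  have hl_pos n : 0 < l n := (pow_pos hΔ0 n).trans_le (hl n)
  have hu_mul m n : u (m + n) ≤ u m * u n := by
    simpa only [u, pow_add] using limsup_Ft_mul_le hF0 hmono (two_inv_pow_mem_Ioc m) (hmem n)
  have hl_mul m n : l m * l n ≤ l (m + n) := by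
    simpa only [l, pow_add] using
      liminf_mul_liminf_le_liminf_Ft hF0 hmono (two_inv_pow_mem_Ioc m) (hmem n)
  have hu_almost_mul m n : u m * u n ≤ C ^ 2 * u (m + n) :=
    calc u m * u n ≤ (C * l m) * (C * l n) :=
          mul_le_mul (hcmp _ (two_inv_pow_mem_Ioc m)) (hcmp _ (two_inv_pow_mem_Ioc n))
            ((hl_pos n).le.trans (hlu n)) (mul_pos hC (hl_pos m)).le
      _ = C ^ 2 * (l m * l n) := by ring
      _ ≤ C ^ 2 * u (m + n) := by gcongr; exact (hl_mul m n).trans (hlu _)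
  obtain ⟨p, hp⟩ := exists_rpow_le_and_le_mul_rpow_of_submultiplicative
    (fun n => (hl_pos n).trans_le (hlu n)) hu_mul hu_almost_mul hΔ0 fun n => (hl n).trans (hlu n)
  refine ⟨p, ?_, hp⟩
  have hhalf : (2⁻¹ : ℝ) ^ p ≤ 2⁻¹ ^ (1 : ℝ) := by
    simpa using (hp 1).1.trans (limsup_Ft_le_self hF0 hmono hconv (hmem 1))
  exact (Real.rpow_le_rpow_left_iff_of_base_lt_one (by norm_num) (by norm_num)).1 hhalf

theorem regular_variation_compactness_general
    (F : ℝ → ℝ) (hF0 : F 0 = 0)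
    (hmono : StrictMonoOn F (Ici 0))
    (hconv : ConvexOn ℝ (Ici 0) F)
    (Δ : ℝ) (hΔ : ∀ x ≥ (0 : ℝ), F (2 * x) ≤ Δ * F x)
    (C : ℝ) (hC : 1 < C)
    (hcmp : ∀ x ∈ Ioc (0 : ℝ) 1,
      limsup (fun t => Ft F t x) atTop ≤ C * liminf (fun t => Ft F t x) atTop) :
    ∃ p : ℝ, 1 ≤ p ∧ ∃ C' > (0 : ℝ), ∀ x₀ ∈ Ioc (0 : ℝ) 1, ∃ t₀ : ℝ,
      ∀ t ≥ t₀, ∀ x, x₀ ≤ x → x ≤ 1 →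
        C'⁻¹ * x ^ p ≤ Ft F t x ∧ Ft F t x ≤ C' * x ^ p := by
  obtain ⟨p, hp, hlimsup⟩ :=
    exists_rpow_le_limsup_Ft_two_inv_pow_le hF0 hmono hconv hΔ (zero_lt_one.trans hC) hcmp
  have hdyadic n : ∀ᶠ t in atTop,
      (2 * C ^ 2)⁻¹ * ((2 : ℝ)⁻¹ ^ n) ^ p ≤ Ft F t (2⁻¹ ^ n) ∧
        Ft F t (2⁻¹ ^ n) ≤ 2 * C ^ 2 * ((2 : ℝ)⁻¹ ^ n) ^ p :=
    have hmem := Ioc_subset_Icc_self (two_inv_pow_mem_Ioc n)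
    eventually_le_and_le_of_limsup_le_mul_liminf hC.le (by positivity)
      (isBoundedUnder_le_Ft hF0 hmono hmem) (isBoundedUnder_ge_Ft hF0 hmono hmem)
      (hcmp _ (two_inv_pow_mem_Ioc n)) (hlimsup n).1 (hlimsup n).2
  refine ⟨p, hp, 2 ^ p * (2 * C ^ 2), by positivity, fun x₀ hx₀ => ?_⟩
  obtain ⟨N, hN⟩ := exists_pow_lt_of_lt_one hx₀.1 (by norm_num : (2⁻¹ : ℝ) < 1)
  obtain ⟨t₀, ht₀⟩ := ((eventually_gt_atTop 0).and
    ((eventually_all_finite (finite_Iic (N + 1))).2 fun n _ => hdyadic n)).exists_forall_of_atTop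
  refine ⟨t₀, fun t ht x hx₀x hx1 => ?_⟩
  obtain ⟨htpos, hbounds⟩ := ht₀ t ht
  exact inv_mul_rpow_le_and_le_mul_rpow_of_two_inv_pow
    (fun y hy z _ hyz => Ft_mono hF0 hmono htpos (le_of_lt hy) hyz) (by linarith) (by positivity)
    hbounds ⟨hN.le.trans hx₀x, hx1⟩

/-- If an Orlicz function `F` with the Δ₂-condition satisfies
`limsup_{t→∞} F_t(x) ≤ C liminf_{t→∞} F_t(x)` for all `0 < x ≤ 1`, then there is
`1 ≤ p < ∞` and a constant `C'` (depending only on `C` and the Δ₂ constant)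
such that for every `x₀ ∈ (0,1]` there is `t₀ < ∞` with
`C'⁻¹ x^p ≤ F_t(x) ≤ C' x^p` whenever `t ≥ t₀` and `x₀ ≤ x ≤ 1`. -/
theorem regular_variation_compactness
    (F : ℝ → ℝ) (hF0 : F 0 = 0)
    (hmono : StrictMonoOn F (Ici 0)) (hcont : ContinuousOn F (Ici 0))
    (hconv : ConvexOn ℝ (Ici 0) F)
    (Δ : ℝ) (hΔ : ∀ x ≥ (0 : ℝ), F (2 * x) ≤ Δ * F x)
    (C : ℝ) (hC : 1 < C)
    (hcmp : ∀ x ∈ Ioc (0 : ℝ) 1,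
      limsup (fun t => Ft F t x) atTop ≤ C * liminf (fun t => Ft F t x) atTop) :
    ∃ p : ℝ, 1 ≤ p ∧ ∃ C' > (0 : ℝ), ∀ x₀ ∈ Ioc (0 : ℝ) 1, ∃ t₀ : ℝ,
      ∀ t ≥ t₀, ∀ x, x₀ ≤ x → x ≤ 1 →
        C'⁻¹ * x ^ p ≤ Ft F t x ∧ Ft F t x ≤ C' * x ^ p :=
  regular_variation_compactness_general F hF0 hmono hconv Δ hΔ C hC hcmp
end

section
/- Let F be an Orlicz function satisfying the Δ₂-condition with constant Δ, and write F_t(x) = F(tx)/F(t). Suppose there exist constants C₀, C₁ > 1 and r > 0 such that Φ₊^∞(x, C₀) ≤ C₁ x^{−r} for all 0 < x ≤ 1, where Φ₊^∞(x,C) is the supremum of all n for which there exist 1 ≤ a₁ < b₁ ≤ a₂ < b₂ ≤ ⋯ ≤ a_n < b_n with F_{b_k}(x) ≥ C F_{a_k}(x) for all k. Then there exist constants C₂ > 1 and r' > 0 such that Φ₋^∞(x, C₂) ≤ C₂ x^{−r'} for all 0 < x ≤ 1, where Φ₋^∞(x,C) is the analogous supremum with the condition F_{a_k}(x) ≥ C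 F_{b_k}(x). -/
open Set

/-- A chain `1 ≤ a₁ < b₁ ≤ a₂ < b₂ ≤ ⋯ ≤ a_n < b_n`. -/
def OrlChain (a b : ℕ → ℝ) (n : ℕ) : Prop :=
  (∀ k < n, 1 ≤ a k ∧ a k < b k) ∧ ∀ k, k + 1 < n → b k ≤ a (k + 1)

/-!
For `t ≥ 1`, `log F_t(x)` lies in `[-⌈1/x⌉ log Δ, 0]` by monotonicity and the Δ₂-condition.
Take `C₂ ≥ C₀²`, so each step `a_k → b_k` of a downward chain lowers `log F_t(x)` by at least
`2 log C₀`. Each gap `b_k → a_{k+1}` raises it by less than `log C₀` unless it is an upward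
jump by `C₀`, and by at most `⌈1/x⌉ log Δ` in any case. Staying inside the interval then
forces `n log C₀ ≤ (u + 1) ⌈1/x⌉ log Δ`, where `u` is the number of upward-jump gaps. Those
gaps form an upward chain themselves, so `u ≤ C₁ x^{-r}` and `n = O(x^{-(r+1)})`.
-/

namespace OrlChain

variable {a b : ℕ → ℝ} {n N : ℕ}

theorem monotoneOn_a (h : OrlChain a b n) : MonotoneOn a (Iio n) :=
  monotoneOn_of_le_add_one ordConnected_Iio fun k _ hk hk1 ↦
    (h.1 k hk).2.le.trans (h.2 k hk1)

theorem exists_chain_of_gaps (h : OrlChain a b (N + 1)) (S : Finset ℕ)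
    (hS : ∀ k ∈ S, k < N ∧ b k < a (k + 1)) :
    ∃ e : ℕ → ℕ, OrlChain (fun j ↦ b (e j)) (fun j ↦ a (e j + 1)) S.card ∧
      ∀ j < S.card, e j ∈ S := by
  have hf : (Set.ofPred (· ∈ S)).Finite := S.finite_toSet
  have hcard : hf.toFinset = S := Finset.finite_toSet_toFinset S
  have hmem : ∀ j < S.card, Nat.nth (· ∈ S) j ∈ S := fun j hj ↦
    Nat.nth_mem_of_lt_card hf (by rwa [hcard])
  refine ⟨Nat.nth (· ∈ S), ⟨fun j hj ↦ ?_, fun j hj ↦ ?_⟩, hmem⟩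
  · obtain ⟨hkN, hgap⟩ := hS _ (hmem j hj)
    exact ⟨(h.1 _ (by omega)).1.trans (h.1 _ (by omega)).2.le, hgap⟩
  · have hlt : Nat.nth (· ∈ S) j < Nat.nth (· ∈ S) (j + 1) :=
      Nat.nth_lt_nth_of_lt_card hf (Nat.lt_succ_self j) (by rwa [hcard])
    have hkN := (hS _ (hmem (j + 1) hj)).1
    exact (h.monotoneOn_a (mem_Iio.2 (by omega)) (mem_Iio.2 (by omega)) hlt).trans
      (h.1 _ (by omega)).2.le

end OrlChain

section Walk

open Finset

/-- Read `v k`, `w k` as the values at `a_k`, `b_k` of a walk confined to `[lo, hi]`: each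
step `a_k → b_k` drops by at least `2c`, and each step `b_k → a_{k+1}` outside `P` rises by
at most `c`. The invariant is `w j + (j + 2) c ≤ v 0 + #P_{<j} (hi - lo)`. -/
theorem succ_mul_le_of_drops {v w : ℕ → ℝ} {lo hi c : ℝ} {N : ℕ} (P : ℕ → Prop)
    [DecidablePred P] (hc : 0 ≤ c) (hv : ∀ k ≤ N, v k ≤ hi) (hw : ∀ k ≤ N, lo ≤ w k)
    (hdrop : ∀ k ≤ N, w k + 2 * c ≤ v k) (hrise : ∀ k < N, ¬ P k → v (k + 1) ≤ w k + c) :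
    ((N : ℝ) + 1) * c ≤ (#{k ∈ range N | P k} + 1) * (hi - lo) := by
  have key : ∀ j ≤ N, w j + (j + 2) * c ≤ v 0 + #{k ∈ range j | P k} * (hi - lo) := by
    intro j hj
    induction j with
    | zero => simpa using hdrop 0 (Nat.zero_le N)
    | succ j ih =>
      have ih := ih (by omega)
      have hdrop := hdrop (j + 1) hj
      rw [range_add_one, filter_insert]
      by_cases hP : P j
      · rw [if_pos hP, card_insert_of_notMem (by simp)]
        have := hv (j + 1) hj
        have := hw j (by omega)
        push_cast
        linarith
      · rw [if_neg hP]
        have := hrise j (by omega) hP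
        push_cast
        linarith
  have := key N le_rfl
  have := hv 0 (Nat.zero_le N)
  have := hw N le_rfl
  linarith

end Walk

theorem one_le_two_pow_ceil_inv_mul {x : ℝ} (hx : 0 < x) : 1 ≤ 2 ^ ⌈x⁻¹⌉₊ * x := by
  have : x⁻¹ ≤ 2 ^ ⌈x⁻¹⌉₊ := (Nat.le_ceil _).trans (mod_cast Nat.lt_two_pow_self.le)
  calc 1 = x⁻¹ * x := (inv_mul_cancel₀ hx.ne').symm
    _ ≤ 2 ^ ⌈x⁻¹⌉₊ * x := by gcongr

theorem ceil_inv_le_two_mul_inv {x : ℝ} (hx0 : 0 < x) (hx1 : x ≤ 1) :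
    (⌈x⁻¹⌉₊ : ℝ) ≤ 2 * x⁻¹ := by
  have := Nat.ceil_lt_add_one (inv_nonneg.2 hx0.le)
  have := (one_le_inv₀ hx0).2 hx1
  linarith

noncomputable def upwardGaps (F : ℝ → ℝ) (C x : ℝ) (a b : ℕ → ℝ) (N : ℕ) : Finset ℕ :=
  (Finset.range N).filter fun k ↦ C * Ft F (b k) x ≤ Ft F (a (k + 1)) x

section Orlicz

variable {F : ℝ → ℝ} {Δ C D t x : ℝ} {a b : ℕ → ℝ} {N m : ℕ}

theorem one_lt_of_doubling (hF0 : F 0 = 0) (hmono : StrictMonoOn F (Ici 0))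
    (hΔ : ∀ x ≥ (0 : ℝ), F (2 * x) ≤ Δ * F x) : 1 < Δ := by
  have h1 : 0 < F 1 := hF0 ▸ hmono (by simp) (by simp) one_pos
  have h12 : F 1 < F 2 := hmono (by simp) (by simp) one_lt_two
  have h2 : F 2 ≤ Δ * F 1 := by simpa using hΔ 1 zero_le_one
  by_contra! hΔ1
  nlinarith

theorem le_pow_mul_of_doubling (hΔ0 : 0 ≤ Δ) (hΔ : ∀ x ≥ (0 : ℝ), F (2 * x) ≤ Δ * F x)
    (k : ℕ) {y : ℝ} (hy : 0 ≤ y) : F (2 ^ k * y) ≤ Δ ^ k * F y := by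
  induction k with
  | zero => simp
  | succ k ih =>
    calc F (2 ^ (k + 1) * y) = F (2 * (2 ^ k * y)) := by ring_nf
      _ ≤ Δ * F (2 ^ k * y) := hΔ _ (by positivity)
      _ ≤ Δ * (Δ ^ k * F y) := mul_le_mul_of_nonneg_left ih hΔ0
      _ = Δ ^ (k + 1) * F y := by ring

theorem Ft_pos (hF0 : F 0 = 0) (hmono : StrictMonoOn F (Ici 0)) (ht : 0 < t) (hx : 0 < x) :
    0 < Ft F t x :=
  div_pos (hF0 ▸ hmono (by simp) (mul_pos ht hx).le (mul_pos ht hx))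
    (hF0 ▸ hmono (by simp) ht.le ht)

theorem log_Ft_nonpos (hF0 : F 0 = 0) (hmono : MonotoneOn F (Ici 0)) (ht : 0 ≤ t)
    (hx0 : 0 ≤ x) (hx1 : x ≤ 1) : Real.log (Ft F t x) ≤ 0 := by
  have htx : 0 ≤ t * x := mul_nonneg ht hx0
  have hFt : 0 ≤ F t := hF0 ▸ hmono (by simp) ht ht
  refine Real.log_nonpos (div_nonneg (hF0 ▸ hmono (by simp) htx htx) hFt) ?_
  exact div_le_one_of_le₀ (hmono htx ht (mul_le_of_le_one_right ht hx1)) hFt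

theorem neg_mul_log_le_log_Ft (hF0 : F 0 = 0) (hmono : StrictMonoOn F (Ici 0))
    (hΔ : ∀ x ≥ (0 : ℝ), F (2 * x) ≤ Δ * F x) (ht : 0 < t) (hx : 0 < x)
    (hm : 1 ≤ 2 ^ m * x) : -(m * Real.log Δ) ≤ Real.log (Ft F t x) := by
  have htx : 0 < t * x := mul_pos ht hx
  have hFt : 0 < F t := hF0 ▸ hmono (by simp) ht.le ht
  have hFtx : 0 < F (t * x) := hF0 ▸ hmono (by simp) htx.le htx
  have hΔ0 : 0 < Δ := zero_lt_one.trans (one_lt_of_doubling hF0 hmono hΔ)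
  have hle : F t ≤ Δ ^ m * F (t * x) := calc
    F t ≤ F (2 ^ m * (t * x)) :=
      hmono.monotoneOn ht.le (by simp only [mem_Ici]; positivity) (by nlinarith)
    _ ≤ Δ ^ m * F (t * x) := le_pow_mul_of_doubling hΔ0.le hΔ m htx.le
  have := Real.log_le_log hFt hle
  rw [Real.log_mul (pow_pos hΔ0 m).ne' hFtx.ne', Real.log_pow] at this
  rw [Ft, Real.log_div hFtx.ne' hFt.ne']
  linarith

theorem OrlChain.exists_upward_chain (hF0 : F 0 = 0) (hmono : StrictMonoOn F (Ici 0))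
    (hC : 1 < C) (hx : 0 < x) (h : OrlChain a b (N + 1)) :
    ∃ a' b' : ℕ → ℝ, OrlChain a' b' (upwardGaps F C x a b N).card ∧
      ∀ j < (upwardGaps F C x a b N).card, C * Ft F (a' j) x ≤ Ft F (b' j) x := by
  obtain ⟨e, he, hmem⟩ := h.exists_chain_of_gaps (upwardGaps F C x a b N) fun k hk ↦ by
    obtain ⟨hkN, hup⟩ := Finset.mem_filter.1 hk
    rw [Finset.mem_range] at hkN
    refine ⟨hkN, (h.2 k (by omega)).lt_of_ne fun heq ↦ ?_⟩
    have hbk := Ft_pos hF0 hmono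
      (zero_lt_one.trans_le ((h.1 k (by omega)).1.trans (h.1 k (by omega)).2.le)) hx
    rw [← heq] at hup
    nlinarith
  exact ⟨_, _, he, fun j hj ↦ (Finset.mem_filter.1 (hmem j hj)).2⟩

theorem OrlChain.succ_mul_log_le_card_upwardGaps (hF0 : F 0 = 0)
    (hmono : StrictMonoOn F (Ici 0)) (hΔ : ∀ x ≥ (0 : ℝ), F (2 * x) ≤ Δ * F x) (hC : 1 < C)
    (hx0 : 0 < x) (hx1 : x ≤ 1) (hm : 1 ≤ 2 ^ m * x) (h : OrlChain a b (N + 1)) (hCD : C ^ 2 ≤ D)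
    (hdown : ∀ k < N + 1, D * Ft F (b k) x ≤ Ft F (a k) x) :
    ((N : ℝ) + 1) * Real.log C ≤
      ((upwardGaps F C x a b N).card + 1) * (m * Real.log Δ) := by
  have ha : ∀ k < N + 1, 0 < a k := fun k hk ↦ zero_lt_one.trans_le (h.1 k hk).1
  have hb : ∀ k < N + 1, 0 < b k := fun k hk ↦ (ha k hk).trans (h.1 k hk).2
  have hpos : ∀ t > 0, 0 < Ft F t x := fun t ht ↦ Ft_pos hF0 hmono ht hx0
  have := succ_mul_le_of_drops (v := fun k ↦ Real.log (Ft F (a k) x))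
    (w := fun k ↦ Real.log (Ft F (b k) x)) (hi := 0) (N := N)
    (fun k ↦ C * Ft F (b k) x ≤ Ft F (a (k + 1)) x) (Real.log_pos hC).le
    (fun k hk ↦ log_Ft_nonpos hF0 hmono.monotoneOn (ha k (by omega)).le hx0.le hx1)
    (fun k hk ↦ neg_mul_log_le_log_Ft hF0 hmono hΔ (hb k (by omega)) hx0 hm)
    (fun k hk ↦ by
      have hbk := hpos _ (hb k (by omega))
      have := Real.log_le_log (by positivity)
        ((mul_le_mul_of_nonneg_right hCD hbk.le).trans (hdown k (by omega)))
      rw [Real.log_mul (by positivity) hbk.ne', Real.log_pow] at this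
      push_cast at this
      linarith)
    (fun k hk hup ↦ by
      have hbk := hpos _ (hb k (by omega))
      have := Real.log_le_log (hpos _ (ha (k + 1) (by omega))) (not_le.1 hup).le
      rw [Real.log_mul (by positivity) hbk.ne'] at this
      linarith)
  rwa [zero_sub, neg_neg] at this

end Orlicz

theorem downward_count_of_upward_count_general
    (F : ℝ → ℝ) (hF0 : F 0 = 0)
    (hmono : StrictMonoOn F (Ici 0))
    (Δ : ℝ) (hΔ : ∀ x ≥ (0 : ℝ), F (2 * x) ≤ Δ * F x)
    (C₀ C₁ r : ℝ) (hC₀ : 1 < C₀) (hr : 0 < r)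
    (hplus : ∀ x ∈ Ioc (0 : ℝ) 1, ∀ (n : ℕ) (a b : ℕ → ℝ), OrlChain a b n →
      (∀ k < n, C₀ * Ft F (a k) x ≤ Ft F (b k) x) → (n : ℝ) ≤ C₁ * x ^ (-r)) :
    ∃ C₂ > (1 : ℝ), ∃ r' > (0 : ℝ), ∀ x ∈ Ioc (0 : ℝ) 1,
      ∀ (n : ℕ) (a b : ℕ → ℝ), OrlChain a b n →
      (∀ k < n, C₂ * Ft F (b k) x ≤ Ft F (a k) x) → (n : ℝ) ≤ C₂ * x ^ (-r') := by
  have hlogΔ : 0 < Real.log Δ := Real.log_pos (one_lt_of_doubling hF0 hmono hΔ)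
  have hlogC₀ : 0 < Real.log C₀ := Real.log_pos hC₀
  set K := 2 * (C₁ + 1) * Real.log Δ / Real.log C₀
  have hC₂ : 1 < max (C₀ ^ 2) K := (one_lt_pow₀ hC₀ two_ne_zero).trans_le (le_max_left _ _)
  refine ⟨max (C₀ ^ 2) K, hC₂, r + 1, by linarith, ?_⟩
  rintro x ⟨hx0, hx1⟩ n a b hch hdown
  obtain _ | N := n
  · simpa using mul_nonneg (zero_le_one.trans hC₂.le) (Real.rpow_nonneg hx0.le _)
  have hcount := hch.succ_mul_log_le_card_upwardGaps hF0 hmono hΔ hC₀ hx0 hx1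
    (one_le_two_pow_ceil_inv_mul hx0) (le_max_left _ _) hdown
  obtain ⟨a', b', hch', hup⟩ := hch.exists_upward_chain hF0 hmono hC₀ hx0
  have hu := hplus x ⟨hx0, hx1⟩ _ a' b' hch' hup
  have hxr : 1 ≤ x ^ (-r) := Real.one_le_rpow_of_pos_of_le_one_of_nonpos hx0 hx1 (by linarith)
  have hN : ((N : ℝ) + 1) * Real.log C₀ ≤ K * x ^ (-(r + 1)) * Real.log C₀ := calc
    _ ≤ ((upwardGaps F C₀ x a b N).card + 1) * (⌈x⁻¹⌉₊ * Real.log Δ) := hcount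
    _ ≤ ((C₁ + 1) * x ^ (-r)) * (2 * x⁻¹ * Real.log Δ) :=
      mul_le_mul (by linarith) (by gcongr; exact ceil_inv_le_two_mul_inv hx0 hx1)
        (by positivity) (by nlinarith)
    _ = K * x ^ (-(r + 1)) * Real.log C₀ := by
      rw [neg_add, Real.rpow_add hx0, Real.rpow_neg_one]
      simp only [K]
      field_simp
  push_cast
  calc (N : ℝ) + 1 ≤ K * x ^ (-(r + 1)) := le_of_mul_le_mul_right hN hlogC₀
    _ ≤ max (C₀ ^ 2) K * x ^ (-(r + 1)) := by gcongr; exact le_max_right _ _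

/-- For an Orlicz function with the Δ₂-condition, a polynomial bound on the number
of upward jumps `F_{b_k}(x) ≥ C₀ F_{a_k}(x)` implies a polynomial bound on the number
of downward jumps `F_{a_k}(x) ≥ C₂ F_{b_k}(x)`. -/
theorem downward_count_of_upward_count
    (F : ℝ → ℝ) (hF0 : F 0 = 0)
    (hmono : StrictMonoOn F (Ici 0)) (hcont : ContinuousOn F (Ici 0))
    (hconv : ConvexOn ℝ (Ici 0) F)
    (Δ : ℝ) (hΔ : ∀ x ≥ (0 : ℝ), F (2 * x) ≤ Δ * F x)
    (C₀ C₁ r : ℝ) (hC₀ : 1 < C₀) (hC₁ : 1 < C₁) (hr : 0 < r)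
    (hplus : ∀ x ∈ Ioc (0 : ℝ) 1, ∀ (n : ℕ) (a b : ℕ → ℝ), OrlChain a b n →
      (∀ k < n, C₀ * Ft F (a k) x ≤ Ft F (b k) x) → (n : ℝ) ≤ C₁ * x ^ (-r)) :
    ∃ C₂ > (1 : ℝ), ∃ r' > (0 : ℝ), ∀ x ∈ Ioc (0 : ℝ) 1,
      ∀ (n : ℕ) (a b : ℕ → ℝ), OrlChain a b n →
      (∀ k < n, C₂ * Ft F (b k) x ≤ Ft F (a k) x) → (n : ℝ) ≤ C₂ * x ^ (-r') :=
  downward_count_of_upward_count_general F hF0 hmono Δ hΔ C₀ C₁ r hC₀ hr hplus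
end

section
/- Let F be an Orlicz function with the Δ₂-condition and F_t(x) = F(tx)/F(t). The following are equivalent: (i) there exist C₀, C₁ > 1 such that for all chains 1 ≤ a₁ < b₁ ≤ a₂ < b₂ ≤ ⋯ ≤ a_n < b_n and all x₁, …, x_n ∈ [0,1], Σ_{k=1}^n (F_{b_k}(x_k) − C₀ F_{a_k}(x_k)) ≤ C₁; (ii) there exist a bounded monotone increasing function w: [1,∞) → ℝ and a constant C such that F_t(x) ≤ C F_s(x) + w(t) − w(s) whenever 1 ≤ s ≤ t and 0 ≤ x ≤ 1. -/
open Set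

lemma orl_b_le_a (a b : ℕ → ℝ) (m : ℕ) (h : OrlChain a b m) :
    ∀ k j, k < j → j < m → b k ≤ a j := by
  intro k j hkj hjm
  induction j with
  | zero => omega
  | succ j ih =>
    rcases Nat.lt_succ_iff_lt_or_eq.mp hkj with h' | h'
    · have h1 := ih h' (by omega)
      have h2 := (h.1 j (by omega)).2
      have h3 := h.2 j hjm
      linarith
    · subst h'
      exact h.2 k hjm

lemma chain_telescope (w : ℝ → ℝ) (hw : MonotoneOn w (Ici 1)) (a b : ℕ → ℝ) :
    ∀ n, OrlChain a b n → ∀ u, 1 ≤ u → (∀ k < n, b k ≤ u) →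
    ∑ k ∈ Finset.range n, (w (b k) - w (a k)) ≤ w u - w 1 := by
  intro n
  induction n with
  | zero =>
    intro _ u hu _
    simp only [Finset.range_zero, Finset.sum_empty]
    have := hw (mem_Ici.mpr le_rfl) (mem_Ici.mpr hu) hu
    linarith
  | succ n ih =>
    intro hch u hu hbu
    have hchain_n : OrlChain a b n :=
      ⟨fun k hk => hch.1 k (by omega), fun k hk => hch.2 k (by omega)⟩
    have han : 1 ≤ a n := (hch.1 n (by omega)).1
    have hbn : a n < b n := (hch.1 n (by omega)).2
    have hprev : ∀ k < n, b k ≤ a n := fun k hk =>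
      orl_b_le_a a b (n + 1) hch k n hk (by omega)
    have h1 := ih hchain_n (a n) han hprev
    rw [Finset.sum_range_succ]
    have hbn1 : (1 : ℝ) ≤ b n := han.trans hbn.le
    have h2 : w (b n) ≤ w u :=
      hw (mem_Ici.mpr hbn1) (mem_Ici.mpr hu) (hbu n (by omega))
    have h3 : w (a n) ≤ w (b n) :=
      hw (mem_Ici.mpr han) (mem_Ici.mpr hbn1) hbn.le
    have h4 : w (a n) ≤ w (a n) := le_rfl
    -- sum ≤ (w (a n) - w 1) + (w (b n) - w (a n)) = w (b n) - w 1 ≤ w u - w 1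
    linarith

/-- Equivalence of the summation condition (i) and the weight-function condition (ii)
in the characterization of elastic Orlicz functions. -/
theorem elastic_sum_iff_weight
    (F : ℝ → ℝ) (hF0 : F 0 = 0)
    (hmono : StrictMonoOn F (Ici 0)) (hcont : ContinuousOn F (Ici 0))
    (hconv : ConvexOn ℝ (Ici 0) F)
    (Δ : ℝ) (hΔ : ∀ x ≥ (0 : ℝ), F (2 * x) ≤ Δ * F x) :
    (∃ C₀ > (1 : ℝ), ∃ C₁ > (1 : ℝ), ∀ (n : ℕ) (a b : ℕ → ℝ) (xs : ℕ → ℝ),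
        OrlChain a b n → (∀ k < n, xs k ∈ Icc (0 : ℝ) 1) →
        ∑ k ∈ Finset.range n, (Ft F (b k) (xs k) - C₀ * Ft F (a k) (xs k)) ≤ C₁) ↔
    (∃ w : ℝ → ℝ, MonotoneOn w (Ici 1) ∧ BddAbove (w '' Ici 1) ∧
      ∃ C : ℝ, ∀ s t : ℝ, 1 ≤ s → s ≤ t → ∀ x ∈ Icc (0 : ℝ) 1,
        Ft F t x ≤ C * Ft F s x + w t - w s) := by
  have hFt_nonneg : ∀ t : ℝ, 1 ≤ t → ∀ x ∈ Icc (0 : ℝ) 1, 0 ≤ Ft F t x := by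
    intro t ht x hx
    have ht0 : (0 : ℝ) < t := lt_of_lt_of_le one_pos ht
    have htx : 0 ≤ t * x := mul_nonneg ht0.le hx.1
    have hFtx : 0 ≤ F (t * x) := by
      have := hmono.monotoneOn (mem_Ici.mpr le_rfl) (mem_Ici.mpr htx) htx
      rw [hF0] at this; exact this
    have hFt : 0 < F t := by
      have := hmono (mem_Ici.mpr le_rfl) (mem_Ici.mpr ht0.le) ht0
      rw [hF0] at this; exact this
    exact div_nonneg hFtx hFt.le
  constructor
  · rintro ⟨C₀, hC₀, C₁, hC₁, hsum⟩
    set S : ℝ → Set ℝ := fun t => {v | ∃ (n : ℕ) (a b xs : ℕ → ℝ), OrlChain a b n ∧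
      (∀ k < n, xs k ∈ Icc (0 : ℝ) 1) ∧ (∀ k < n, b k ≤ t) ∧
      v = ∑ k ∈ Finset.range n, (Ft F (b k) (xs k) - C₀ * Ft F (a k) (xs k))} with hS
    have hzero : ∀ t, (0 : ℝ) ∈ S t := by
      intro t
      refine ⟨0, fun _ => 1, fun _ => 1, fun _ => 0, ⟨?_, ?_⟩, ?_, ?_, by simp⟩ <;>
        (intro k hk; omega)
    have hbdd : ∀ t, ∀ v ∈ S t, v ≤ C₁ := by
      rintro t v ⟨n, a, b, xs, hch, hxs, hbt, rfl⟩
      exact hsum n a b xs hch hxs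
    refine ⟨fun t => sSup (S t), ?_, ?_, C₀, ?_⟩
    · intro s hs t ht hst
      refine csSup_le_csSup ⟨C₁, fun v hv => hbdd t v hv⟩ ⟨0, hzero s⟩ ?_
      rintro v ⟨n, a, b, xs, hch, hxs, hbs, rfl⟩
      exact ⟨n, a, b, xs, hch, hxs, fun k hk => (hbs k hk).trans hst, rfl⟩
    · refine ⟨C₁, ?_⟩
      rintro _ ⟨t, ht, rfl⟩
      exact csSup_le ⟨0, hzero t⟩ (hbdd t)
    · intro s t hs hst x hx
      rcases eq_or_lt_of_le hst with rfl | hlt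
      · have h0 := hFt_nonneg s hs x hx
        nlinarith
      · have key : sSup (S s) ≤ sSup (S t) - (Ft F t x - C₀ * Ft F s x) := by
          apply csSup_le ⟨0, hzero s⟩
          rintro v ⟨n, a, b, xs, hch, hxs, hbs, rfl⟩
          have hmem : (∑ k ∈ Finset.range n,
              (Ft F (b k) (xs k) - C₀ * Ft F (a k) (xs k))) +
              (Ft F t x - C₀ * Ft F s x) ∈ S t := by
            refine ⟨n + 1, fun k => if k = n then s else a k,
              fun k => if k = n then t else b k,
              fun k => if k = n then x else xs k, ⟨?_, ?_⟩, ?_, ?_, ?_⟩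
            · intro k hk
              by_cases hkn : k = n
              · subst hkn; simp only [if_pos rfl]; exact ⟨hs, hlt⟩
              · simp only [if_neg hkn]; exact hch.1 k (by omega)
            · intro k hk
              have hkn : k ≠ n := by omega
              by_cases h1 : k + 1 = n
              · simp only [if_neg hkn, if_pos h1]; exact hbs k (by omega)
              · simp only [if_neg hkn, if_neg h1]; exact hch.2 k (by omega)
            · intro k hk
              by_cases hkn : k = n
              · subst hkn; simp only [if_pos rfl]; exact hx
              · simp only [if_neg hkn]; exact hxs k (by omega)
            · intro k hk
              by_cases hkn : k = n
              · subst hkn; simp only [if_pos rfl]; exact le_rfl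
              · simp only [if_neg hkn]; exact (hbs k (by omega)).trans hst
            · rw [Finset.sum_range_succ]
              have h1 : ∀ k ∈ Finset.range n,
                  (Ft F (if k = n then t else b k) (if k = n then x else xs k) -
                    C₀ * Ft F (if k = n then s else a k) (if k = n then x else xs k)) =
                  (Ft F (b k) (xs k) - C₀ * Ft F (a k) (xs k)) := by
                intro k hk
                have : k ≠ n := Nat.ne_of_lt (Finset.mem_range.mp hk)
                simp [this]
              rw [Finset.sum_congr rfl h1]
              simp
          have := le_csSup ⟨C₁, hbdd t⟩ hmem
          linarith
        linarith
  · rintro ⟨w, hwmono, ⟨M, hM⟩, C, hC⟩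
    have hM' : ∀ t : ℝ, 1 ≤ t → w t ≤ M := fun t ht =>
      hM ⟨t, mem_Ici.mpr ht, rfl⟩
    have hw1M : w 1 ≤ M := hM' 1 le_rfl
    refine ⟨max C 1 + 1, by have := le_max_right C 1; linarith,
      max (M - w 1) 0 + 2, by have := le_max_right (M - w 1) 0; linarith, ?_⟩
    intro n a b xs hch hxs
    have step : ∀ k ∈ Finset.range n,
        Ft F (b k) (xs k) - (max C 1 + 1) * Ft F (a k) (xs k) ≤ w (b k) - w (a k) := by
      intro k hk
      have hk' : k < n := Finset.mem_range.mp hk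
      have hak : 1 ≤ a k := (hch.1 k hk').1
      have habk : a k ≤ b k := (hch.1 k hk').2.le
      have h1 := hC (a k) (b k) hak habk (xs k) (hxs k hk')
      have h2 : 0 ≤ Ft F (a k) (xs k) := hFt_nonneg (a k) hak (xs k) (hxs k hk')
      have h3 : C ≤ max C 1 + 1 := by have := le_max_left C 1; linarith
      nlinarith
    have hsum1 : ∑ k ∈ Finset.range n,
        (Ft F (b k) (xs k) - (max C 1 + 1) * Ft F (a k) (xs k)) ≤
        ∑ k ∈ Finset.range n, (w (b k) - w (a k)) :=
      Finset.sum_le_sum step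
    have hsum2 : ∑ k ∈ Finset.range n, (w (b k) - w (a k)) ≤ M - w 1 := by
      rcases n with _ | m
      · simp; linarith
      · have hbm1 : 1 ≤ b m :=
          ((hch.1 m (by omega)).1).trans (hch.1 m (by omega)).2.le
        have hub : ∀ k < m + 1, b k ≤ b m := by
          intro k hk
          rcases Nat.lt_succ_iff_lt_or_eq.mp hk with h' | h'
          · exact (orl_b_le_a a b (m + 1) hch k m h' (by omega)).trans
              (hch.1 m (by omega)).2.le
          · subst h'; exact le_rfl
        have := chain_telescope w hwmono a b (m + 1) hch (b m) hbm1 hub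
        have hwbm : w (b m) ≤ M := hM' (b m) hbm1
        linarith
    have := le_max_left (M - w 1) 0
    linarith
end

section
/- Let (Y₀, Y₁) be a compatible couple of Banach spaces which is a uniform Calderón couple and is Gagliardo complete (so that K-divisibility holds with universal constant γ), and let X be any Banach space. Then the pair (X ⊕₁ Y₀, X ⊕₁ Y₁) is a Calderón couple: if K(t, (x₀,y₀); X⊕Y₀, X⊕Y₁) ≤ K(t, (x₁,y₁); X⊕Y₀, X⊕Y₁) for all t > 0, then there exists a linear operator S bounded on both X ⊕₁ Y₀ and X ⊕₁ Y₁ with S(x₁,y₁) = (x₀,y₀). -/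
open scoped ENNReal NNReal

/-- A (possibly infinite-valued) norm of a member of a compatible couple, defined
on a common ambient vector space `V`; the space itself is `{v | N v < ∞}`. -/
structure CoupleNorm (V : Type*) [AddCommGroup V] [Module ℝ V] where
  N : V → ℝ≥0∞
  add_le : ∀ x y, N (x + y) ≤ N x + N y
  smul : ∀ (c : ℝ) (x), N (c • x) = (‖c‖₊ : ℝ≥0∞) * N x
  eq_zero : ∀ x, N x = 0 ↔ x = 0

/-- The Peetre K-functional of the couple `(N₀, N₁)`. -/
noncomputable def Kfun {V : Type*} [AddCommGroup V] [Module ℝ V]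
    (N₀ N₁ : V → ℝ≥0∞) (t : ℝ) (v : V) : ℝ≥0∞ :=
  ⨅ u : V, N₀ u + ENNReal.ofReal t * N₁ (v - u)

/-- Concavity for an `ℝ≥0∞`-valued function on `(0,∞)`. -/
def EConcaveOn (φ : ℝ → ℝ≥0∞) : Prop :=
  ∀ s t : ℝ, 0 < s → 0 < t → ∀ a b : ℝ≥0, a + b = 1 →
    (a : ℝ≥0∞) * φ s + (b : ℝ≥0∞) * φ t ≤ φ ((a : ℝ) * s + (b : ℝ) * t)

/-- `(N₀, N₁)` is a uniform Calderón couple. -/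
def UniformCalderon {V : Type*} [AddCommGroup V] [Module ℝ V]
    (N₀ N₁ : V → ℝ≥0∞) : Prop :=
  ∃ C : ℝ≥0, ∀ f g : V, (∀ t > (0 : ℝ), Kfun N₀ N₁ t g ≤ Kfun N₀ N₁ t f) →
    ∃ T : V →ₗ[ℝ] V, T f = g ∧
      ∀ v, N₀ (T v) ≤ (C : ℝ≥0∞) * N₀ v ∧ N₁ (T v) ≤ (C : ℝ≥0∞) * N₁ v

/-- K-divisibility with constant `γ`. -/
def KDivisible {V : Type*} [AddCommGroup V] [Module ℝ V]
    (N₀ N₁ : V → ℝ≥0∞) (γ : ℝ≥0) : Prop :=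
  ∀ (y : V) (φ₁ φ₂ : ℝ → ℝ≥0∞), EConcaveOn φ₁ → EConcaveOn φ₂ →
    (∀ t > (0 : ℝ), Kfun N₀ N₁ t y ≤ φ₁ t + φ₂ t) →
    ∃ u v : V, y = u + v ∧ (∀ t > (0 : ℝ), Kfun N₀ N₁ t u ≤ (γ : ℝ≥0∞) * φ₁ t) ∧
      ∀ t > (0 : ℝ), Kfun N₀ N₁ t v ≤ (γ : ℝ≥0∞) * φ₂ t

/-- The ℓ₁-direct-sum norm of `X ⊕₁ Y`. -/
noncomputable def prodN (X : Type*) [NormedAddCommGroup X] {V : Type*}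
    [AddCommGroup V] [Module ℝ V] (N : V → ℝ≥0∞) : X × V → ℝ≥0∞ :=
  fun p => (‖p.1‖₊ : ℝ≥0∞) + N p.2

/-!
For the ℓ₁-sum, `K(t, (x, y)) = min(1, t) ‖x‖ + K(t, y)`.

If `x₁ ≠ 0`, K-divisibility splits `y₀ = u + v` with `K(t, u) ≤ γ min(1, t) ‖x₁‖` and
`K(t, v) ≤ K(t, γ y₁)`, so `v = T (γ y₁)` for a Calderón operator `T`. The first bound forces
`u ∈ Y₀ ∩ Y₁`: were `K(1, ·)` to vanish on `Y₀`, we would get `K(t, u) ≥ t K(1, u)` for all `t`, so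
some `a ∈ Y₀` has `K(t, u) ≲ K(t, a)`, and a Calderón operator maps `a` to `u`; symmetrically
for `Y₁`. Then `S (x, y) = (λ x • x₀, λ x • u + T (γ y))` with a Hahn–Banach functional `λ`,
`λ x₁ = 1`.

If `x₁ = 0`, then `K(t, y₀) ≤ K(t, y₁)` gives `T y₁ = y₀`, and `‖x₀‖ ≤ K(1, y₁)`; Hahn–Banach for
the extended seminorm `K(1, ·)` gives `η` with `η y₁ = 1` and `|η y| ‖x₀‖ ≤ K(1, y)`, and
`S (x, y) = (η y • x₀, T y)`.
-/

theorem CoupleNorm.N_zero {V : Type*} [AddCommGroup V] [Module ℝ V] (N : CoupleNorm V) :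
    N.N 0 = 0 :=
  (N.eq_zero 0).2 rfl

section Kfun

variable {V : Type*} [AddCommGroup V] [Module ℝ V]

theorem Kfun_concave (N₀ N₁ : V → ℝ≥0∞) (v : V) : EConcaveOn fun t => Kfun N₀ N₁ t v := by
  intro s t hs ht a b hab
  refine le_iInf fun u => ?_
  have hab' : (a : ℝ≥0∞) + b = 1 := by exact_mod_cast hab
  calc (a : ℝ≥0∞) * Kfun N₀ N₁ s v + b * Kfun N₀ N₁ t v
      ≤ a * (N₀ u + ENNReal.ofReal s * N₁ (v - u)) + b * (N₀ u + ENNReal.ofReal t * N₁ (v - u)) := by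
        gcongr <;> exact iInf_le _ u
    _ = (a + b) * N₀ u + (a * ENNReal.ofReal s + b * ENNReal.ofReal t) * N₁ (v - u) := by ring
    _ = N₀ u + ENNReal.ofReal (a * s + b * t) * N₁ (v - u) := by
        rw [hab', one_mul, ENNReal.ofReal_add (by positivity) (by positivity),
          ENNReal.ofReal_mul (NNReal.coe_nonneg a), ENNReal.ofReal_mul (NNReal.coe_nonneg b),
          ENNReal.ofReal_coe_nnreal, ENNReal.ofReal_coe_nnreal]

theorem Kfun_mono (N₀ N₁ : V → ℝ≥0∞) (v : V) {s t : ℝ} (h : s ≤ t) :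
    Kfun N₀ N₁ s v ≤ Kfun N₀ N₁ t v :=
  iInf_mono fun _ => by gcongr

theorem ofReal_mul_Kfun_le (N₀ N₁ : V → ℝ≥0∞) (v : V) {s t : ℝ} (h : s ≤ t) :
    ENNReal.ofReal s * Kfun N₀ N₁ t v ≤ ENNReal.ofReal t * Kfun N₀ N₁ s v := by
  unfold Kfun
  rw [ENNReal.mul_iInf (by simp), ENNReal.mul_iInf (by simp)]
  refine iInf_mono fun u => ?_
  rw [mul_add, mul_add, mul_left_comm, mul_left_comm (ENNReal.ofReal t)]
  gcongr

theorem ofReal_min_mul_Kfun_one_le (N₀ N₁ : V → ℝ≥0∞) (v : V) (t : ℝ) :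
    ENNReal.ofReal (min 1 t) * Kfun N₀ N₁ 1 v ≤ Kfun N₀ N₁ t v := by
  rcases le_total 1 t with h | h
  · simpa [min_eq_left h] using Kfun_mono N₀ N₁ v h
  · simpa [min_eq_right h] using ofReal_mul_Kfun_le N₀ N₁ v h

theorem Kfun_eq_zero_of_Kfun_one_eq_zero (N₀ N₁ : V → ℝ≥0∞) {v : V} (hv : Kfun N₀ N₁ 1 v = 0)
    (t : ℝ) : Kfun N₀ N₁ t v = 0 := by
  rcases le_total t 1 with h | h
  · exact le_antisymm (hv ▸ Kfun_mono N₀ N₁ v h) zero_le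
  · simpa [hv] using ofReal_mul_Kfun_le N₀ N₁ v h

variable (N₀ N₁ : CoupleNorm V)

theorem Kfun_le_left (t : ℝ) (v : V) : Kfun N₀.N N₁.N t v ≤ N₀.N v :=
  (iInf_le _ v).trans_eq (by simp [N₁.N_zero])

theorem Kfun_le_right (t : ℝ) (v : V) : Kfun N₀.N N₁.N t v ≤ ENNReal.ofReal t * N₁.N v :=
  (iInf_le _ 0).trans_eq (by simp [N₀.N_zero])

theorem Kfun_zero (t : ℝ) : Kfun N₀.N N₁.N t 0 = 0 :=
  le_antisymm ((Kfun_le_left N₀ N₁ t 0).trans_eq N₀.N_zero) zero_le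

theorem Kfun_add_le (t : ℝ) (v w : V) :
    Kfun N₀.N N₁.N t (v + w) ≤ Kfun N₀.N N₁.N t v + Kfun N₀.N N₁.N t w := by
  simp only [Kfun, ENNReal.iInf_add, ENNReal.add_iInf]
  refine le_iInf₂ fun b a => (iInf_le _ (a + b)).trans ?_
  rw [show v + w - (a + b) = (v - a) + (w - b) by abel]
  calc N₀.N (a + b) + ENNReal.ofReal t * N₁.N (v - a + (w - b))
      ≤ N₀.N a + N₀.N b + ENNReal.ofReal t * (N₁.N (v - a) + N₁.N (w - b)) := by
        gcongr
        exacts [N₀.add_le a b, N₁.add_le _ _]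
    _ = _ := by ring

theorem Kfun_smul (t c : ℝ) (v : V) :
    Kfun N₀.N N₁.N t (c • v) = ‖c‖₊ * Kfun N₀.N N₁.N t v := by
  rcases eq_or_ne c 0 with rfl | hc
  · simp [Kfun_zero]
  rw [Kfun, ← (LinearEquiv.smulOfNeZero ℝ V c hc).toEquiv.iInf_comp, Kfun,
    ENNReal.mul_iInf (by simp)]
  congr 1 with u
  simp only [LinearEquiv.coe_toEquiv, LinearEquiv.smulOfNeZero_apply, ← smul_sub, N₀.smul,
    N₁.smul]
  ring

end Kfun

section ProdCouple

variable {X : Type*} [NormedAddCommGroup X] [Module ℝ X]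

theorem Kfun_nnnorm (t : ℝ) (x : X) :
    Kfun (fun x : X => (‖x‖₊ : ℝ≥0∞)) (fun x => ‖x‖₊) t x = ENNReal.ofReal (min 1 t) * ‖x‖₊ := by
  refine le_antisymm ?_ (le_iInf fun u => ?_)
  · rcases le_total 1 t with h | h
    · rw [min_eq_left h]
      exact (iInf_le _ x).trans_eq (by simp)
    · rw [min_eq_right h]
      exact (iInf_le _ 0).trans_eq (by simp)
  · have hx : (‖x‖₊ : ℝ≥0∞) ≤ ‖u‖₊ + ‖x - u‖₊ := by
      exact_mod_cast nnnorm_le_nnnorm_add_nnnorm_sub' x u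
    calc ENNReal.ofReal (min 1 t) * ‖x‖₊
        ≤ ENNReal.ofReal (min 1 t) * ‖u‖₊ + ENNReal.ofReal (min 1 t) * ‖x - u‖₊ := by
          rw [← mul_add]; gcongr
      _ ≤ ‖u‖₊ + ENNReal.ofReal t * ‖x - u‖₊ := by
          gcongr
          · exact mul_le_of_le_one_left zero_le (ENNReal.ofReal_le_one.2 (min_le_left _ _))
          · exact min_le_right _ _

theorem Kfun_prodN {V : Type*} [AddCommGroup V] [Module ℝ V] (N₀ N₁ : V → ℝ≥0∞) (t : ℝ)
    (x : X) (y : V) :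
    Kfun (prodN X N₀) (prodN X N₁) t (x, y) =
      Kfun (fun x : X => (‖x‖₊ : ℝ≥0∞)) (fun x => ‖x‖₊) t x + Kfun N₀ N₁ t y := by
  simp only [Kfun, ENNReal.iInf_add, ENNReal.add_iInf, iInf_prod, prodN]
  rw [iInf_comm]
  refine iInf_congr fun a => iInf_congr fun b => ?_
  simp only [Prod.mk_sub_mk]
  ring

end ProdCouple

theorem ENNReal.eq_zero_of_forall_natCast_mul_le {a b : ℝ≥0∞} (hb : b ≠ ⊤)
    (h : ∀ n : ℕ, 0 < n → (n : ℝ≥0∞) * a ≤ b) : a = 0 := by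
  by_contra ha
  obtain ⟨n, hn⟩ := ENNReal.exists_nat_mul_gt ha hb
  rcases n.eq_zero_or_pos with rfl | hpos
  · simp at hn
  · exact (h n hpos).not_gt hn

section Calderon

variable {V : Type*} [AddCommGroup V] [Module ℝ V] (N₀ N₁ : CoupleNorm V)

theorem eq_zero_of_Kfun_one_eq_zero (hCald : UniformCalderon N₀.N N₁.N) {y : V}
    (hy : Kfun N₀.N N₁.N 1 y = 0) : y = 0 := by
  obtain ⟨C, hC⟩ := hCald
  obtain ⟨T, hT, -⟩ := hC 0 y fun t _ => by
    rw [Kfun_eq_zero_of_Kfun_one_eq_zero _ _ hy]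
    exact zero_le
  rw [← hT, map_zero]

theorem exists_le_mul_of_forall_Kfun_le_mul (hCald : UniformCalderon N₀.N N₁.N) {y a : V}
    {m : ℝ≥0} (h : ∀ t > (0 : ℝ), Kfun N₀.N N₁.N t y ≤ m * Kfun N₀.N N₁.N t a) :
    ∃ C : ℝ≥0, N₀.N y ≤ C * N₀.N a ∧ N₁.N y ≤ C * N₁.N a := by
  obtain ⟨C, hC⟩ := hCald
  obtain ⟨T, rfl, hT⟩ := hC ((m : ℝ) • a) y fun t ht => by simpa [Kfun_smul] using h t ht
  refine ⟨C * m, ?_, ?_⟩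
  · simpa [N₀.smul, mul_assoc] using (hT ((m : ℝ) • a)).1
  · simpa [N₁.smul, mul_assoc] using (hT ((m : ℝ) • a)).2

variable {N₀ N₁}

theorem exists_left_ne_top_Kfun_one_ne_zero {y : V} {c : ℝ≥0∞} (hc : c ≠ ⊤)
    (hy : Kfun N₀.N N₁.N 1 y ≠ 0)
    (h : ∀ t > (0 : ℝ), Kfun N₀.N N₁.N t y ≤ ENNReal.ofReal (min 1 t) * c) :
    ∃ a, N₀.N a ≠ ⊤ ∧ Kfun N₀.N N₁.N 1 a ≠ 0 := by
  by_contra! hvanish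
  have key (s : ℝ) : ENNReal.ofReal s * Kfun N₀.N N₁.N 1 y ≤ Kfun N₀.N N₁.N s y := by
    refine le_iInf fun u => ?_
    by_cases hu : N₀.N u = ⊤
    · simp [hu]
    calc ENNReal.ofReal s * Kfun N₀.N N₁.N 1 y
        ≤ ENNReal.ofReal s * (Kfun N₀.N N₁.N 1 u + Kfun N₀.N N₁.N 1 (y - u)) := by
          gcongr
          simpa using Kfun_add_le N₀ N₁ 1 u (y - u)
      _ ≤ ENNReal.ofReal s * N₁.N (y - u) := by
          rw [hvanish u hu, zero_add]
          gcongr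
          simpa using Kfun_le_right N₀ N₁ 1 (y - u)
      _ ≤ _ := le_add_self
  refine hy (ENNReal.eq_zero_of_forall_natCast_mul_le hc fun n hn => ?_)
  calc (n : ℝ≥0∞) * Kfun N₀.N N₁.N 1 y ≤ Kfun N₀.N N₁.N n y := by
        simpa using key n
    _ ≤ ENNReal.ofReal (min 1 n) * c := h n (by positivity)
    _ ≤ c := mul_le_of_le_one_left zero_le (ENNReal.ofReal_le_one.2 (min_le_left _ _))

theorem exists_right_ne_top_Kfun_one_ne_zero {y : V} {c : ℝ≥0∞} (hc : c ≠ ⊤)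
    (hy : Kfun N₀.N N₁.N 1 y ≠ 0)
    (h : ∀ t > (0 : ℝ), Kfun N₀.N N₁.N t y ≤ ENNReal.ofReal (min 1 t) * c) :
    ∃ a, N₁.N a ≠ ⊤ ∧ Kfun N₀.N N₁.N 1 a ≠ 0 := by
  by_contra! hvanish
  have key (s : ℝ) (hs : 0 < s) : Kfun N₀.N N₁.N 1 y ≤ Kfun N₀.N N₁.N s y := by
    refine le_iInf fun u => ?_
    by_cases hu : N₁.N (y - u) = ⊤
    · simp [hu, hs]
    calc Kfun N₀.N N₁.N 1 y ≤ Kfun N₀.N N₁.N 1 u + Kfun N₀.N N₁.N 1 (y - u) := by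
          simpa using Kfun_add_le N₀ N₁ 1 u (y - u)
      _ ≤ N₀.N u := by
          rw [hvanish _ hu, add_zero]
          exact Kfun_le_left N₀ N₁ 1 u
      _ ≤ _ := le_self_add
  refine hy (ENNReal.eq_zero_of_forall_natCast_mul_le hc fun n hn => ?_)
  have hn' : (0 : ℝ) < (n : ℝ)⁻¹ := by positivity
  calc (n : ℝ≥0∞) * Kfun N₀.N N₁.N 1 y ≤ n * (ENNReal.ofReal (min 1 (n : ℝ)⁻¹) * c) := by
        gcongr
        exact (key _ hn').trans (h _ hn')
    _ ≤ n * (ENNReal.ofReal (n : ℝ)⁻¹ * c) := by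
        gcongr
        exact min_le_right _ _
    _ = c := by
        rw [ENNReal.ofReal_inv_of_pos (by positivity), ENNReal.ofReal_natCast, ← mul_assoc,
          ENNReal.mul_inv_cancel (by exact_mod_cast hn.ne') (ENNReal.natCast_ne_top n), one_mul]

theorem ne_top_of_forall_Kfun_le_min_mul (hCald : UniformCalderon N₀.N N₁.N) {y : V}
    {c : ℝ≥0∞} (hc : c ≠ ⊤)
    (h : ∀ t > (0 : ℝ), Kfun N₀.N N₁.N t y ≤ ENNReal.ofReal (min 1 t) * c) :
    N₀.N y ≠ ⊤ ∧ N₁.N y ≠ ⊤ := by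
  rcases eq_or_ne (Kfun N₀.N N₁.N 1 y) 0 with hy | hy
  · simp [eq_zero_of_Kfun_one_eq_zero N₀ N₁ hCald hy, N₀.N_zero, N₁.N_zero]
  have dominated (a : V) (ha : Kfun N₀.N N₁.N 1 a ≠ 0) (ha' : Kfun N₀.N N₁.N 1 a ≠ ⊤) :
      ∃ C : ℝ≥0, N₀.N y ≤ C * N₀.N a ∧ N₁.N y ≤ C * N₁.N a := by
    refine exists_le_mul_of_forall_Kfun_le_mul N₀ N₁ hCald
      (m := (c / Kfun N₀.N N₁.N 1 a).toNNReal) fun t ht => ?_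
    rw [ENNReal.coe_toNNReal (ENNReal.div_ne_top hc ha)]
    calc Kfun N₀.N N₁.N t y ≤ ENNReal.ofReal (min 1 t) * c := h t ht
      _ = c / Kfun N₀.N N₁.N 1 a * (ENNReal.ofReal (min 1 t) * Kfun N₀.N N₁.N 1 a) := by
        rw [mul_left_comm, ENNReal.div_mul_cancel ha ha']
      _ ≤ _ := by grw [ofReal_min_mul_Kfun_one_le]
  obtain ⟨a₀, ha₀, ha₀K⟩ := exists_left_ne_top_Kfun_one_ne_zero hc hy h
  obtain ⟨a₁, ha₁, ha₁K⟩ := exists_right_ne_top_Kfun_one_ne_zero hc hy h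
  obtain ⟨C₀, hC₀, -⟩ := dominated a₀ ha₀K (ne_top_of_le_ne_top ha₀ (Kfun_le_left N₀ N₁ 1 a₀))
  obtain ⟨C₁, -, hC₁⟩ := dominated a₁ ha₁K
    (ne_top_of_le_ne_top ha₁ (by simpa using Kfun_le_right N₀ N₁ 1 a₁))
  exact ⟨ne_top_of_le_ne_top (by finiteness) hC₀, ne_top_of_le_ne_top (by finiteness) hC₁⟩

end Calderon

theorem Seminorm.exists_dual_apply_eq_abs_le {E : Type*} [AddCommGroup E] [Module ℝ E]
    (q : Seminorm ℝ E) (x : E) : ∃ g : Module.Dual ℝ E, g x = q x ∧ ∀ y, |g y| ≤ q y := by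
  let f : E →ₗ.[ℝ] ℝ := LinearPMap.mkSpanSingleton' x (q x) fun (c : ℝ) (hc : c • x = 0) => by
    rcases smul_eq_zero.1 hc with h | h <;> simp [h]
  obtain ⟨g, hgf, hgq⟩ := Module.Dual.exists_extension_of_le_seminorm_real f.domain f.toFun
    (p := q) fun ⟨z, hz⟩ => by
      obtain ⟨c, rfl⟩ := Submodule.mem_span_singleton.1 hz
      rw [LinearPMap.toFun_eq_coe, LinearPMap.mkSpanSingleton'_apply, map_smul_eq_mul,
        smul_eq_mul]
      exact mul_le_mul_of_nonneg_right (le_abs_self c) (apply_nonneg q x)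
  refine ⟨g, ?_, hgq⟩
  exact (hgf ⟨x, Submodule.mem_span_singleton_self x⟩).trans
    (LinearPMap.mkSpanSingleton'_apply_self _ _ _ _)

theorem exists_dual_eq_one_of_eseminorm {V : Type*} [AddCommGroup V] [Module ℝ V]
    (p : V → ℝ≥0∞) (add_le : ∀ x y, p (x + y) ≤ p x + p y)
    (smul : ∀ (c : ℝ) x, p (c • x) = ‖c‖₊ * p x) {y₁ : V} (hy₁ : p y₁ ≠ 0) :
    ∃ η : Module.Dual ℝ V, η y₁ = 1 ∧ ∀ y, ‖η y‖₊ * p y₁ ≤ p y := by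
  -- For `p y₁ = ⊤` the bound says that `η` vanishes wherever `p` is finite.
  let W : Submodule ℝ V :=
    { carrier := {y | p y ≠ ⊤}
      add_mem' := fun ha hb => ne_top_of_le_ne_top (ENNReal.add_ne_top.2 ⟨ha, hb⟩) (add_le _ _)
      zero_mem' := by simpa using (smul 0 0).trans_ne (by simp)
      smul_mem' := fun c x hx => (smul c x).trans_ne (ENNReal.mul_ne_top ENNReal.coe_ne_top hx) }
  by_cases htop : p y₁ = ⊤
  · obtain ⟨f, hf, hfW⟩ := Submodule.exists_dual_map_eq_bot_of_notMem (p := W) (x := y₁)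
      (by simpa [W] using htop) inferInstance
    refine ⟨(f y₁)⁻¹ • f, by simp [hf], fun y => ?_⟩
    by_cases hy : p y = ⊤
    · simp [hy]
    have : f y = 0 := (Submodule.mem_bot ℝ).1 (hfW ▸ Submodule.mem_map_of_mem (p := W) hy)
    simp [this]
  let q : Seminorm ℝ W := Seminorm.of (fun w => (p w).toReal)
    (fun a b => ENNReal.toReal_le_add (add_le a b) a.2 b.2)
    (fun c w => by simp [smul c w])
  have hq (w : W) : q w = (p w).toReal := rfl
  obtain ⟨g, hgy₁, hg⟩ := q.exists_dual_apply_eq_abs_le ⟨y₁, htop⟩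
  obtain ⟨G, hG⟩ := LinearMap.exists_extend g
  have hGW (w : W) : G w = g w := congr($hG w)
  have hκ : 0 < (p y₁).toReal := ENNReal.toReal_pos hy₁ htop
  refine ⟨(p y₁).toReal⁻¹ • G, ?_, fun y => ?_⟩
  · simp [hGW ⟨y₁, htop⟩, hgy₁, hq, hκ.ne']
  by_cases hy : p y = ⊤
  · simp [hy]
  calc (‖((p y₁).toReal⁻¹ • G) y‖₊ : ℝ≥0∞) * p y₁
      = ENNReal.ofReal (‖((p y₁).toReal⁻¹ • G) y‖ * (p y₁).toReal) := by
        rw [ENNReal.ofReal_mul (norm_nonneg _), ofReal_norm, ENNReal.ofReal_toReal htop,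
          enorm_eq_nnnorm]
    _ = ENNReal.ofReal |g ⟨y, hy⟩| := by
        simp only [LinearMap.smul_apply, hGW ⟨y, hy⟩, smul_eq_mul, Real.norm_eq_abs, abs_mul,
          abs_inv, abs_of_pos hκ, mul_comm _ |g _|, mul_assoc, inv_mul_cancel₀ hκ.ne', mul_one]
    _ ≤ p y := (ENNReal.ofReal_le_ofReal (hg ⟨y, hy⟩)).trans_eq (ENNReal.ofReal_toReal hy)

theorem exists_dual_eq_one_nnnorm_le {𝕜 X : Type*} [RCLike 𝕜] [NormedAddCommGroup X]
    [NormedSpace 𝕜 X] {x : X} (hx : x ≠ 0) :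
    ∃ f : StrongDual 𝕜 X, f x = 1 ∧ ∀ z, ‖f z‖₊ ≤ ‖x‖₊⁻¹ * ‖z‖₊ := by
  obtain ⟨g, hg, hgx⟩ := exists_dual_vector 𝕜 x (norm_ne_zero_iff.2 hx)
  refine ⟨(‖x‖⁻¹ : 𝕜) • g, by simp [hgx, hx], fun z => ?_⟩
  rw [← NNReal.coe_le_coe]
  simpa [hg] using mul_le_mul_of_nonneg_left (g.le_opNorm z) (inv_nonneg.2 (norm_nonneg x))

def IsCoupleBounded {W : Type*} [AddCommGroup W] [Module ℝ W] (M₀ M₁ : W → ℝ≥0∞)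
    (S : W →ₗ[ℝ] W) : Prop :=
  ∃ C : ℝ≥0, ∀ z, M₀ (S z) ≤ C * M₀ z ∧ M₁ (S z) ≤ C * M₁ z

section DirectSum

variable {X V : Type*} [NormedAddCommGroup X] [NormedSpace ℝ X] [AddCommGroup V] [Module ℝ V]

theorem prodN_smulRight_add_prodMap_le (N : CoupleNorm V) (ℓ : X × V →ₗ[ℝ] ℝ) (x₀ : X) (u : V)
    (T : V →ₗ[ℝ] V) {A C : ℝ≥0}
    (hℓ : ∀ z, ‖ℓ z‖₊ * prodN X N.N (x₀, u) ≤ A * prodN X N.N z)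
    (hT : ∀ y, N.N (T y) ≤ C * N.N y) (z : X × V) :
    prodN X N.N ((ℓ.smulRight (x₀, u) + LinearMap.prodMap 0 T : X × V →ₗ[ℝ] X × V) z) ≤
      (A + C) * prodN X N.N z := by
  calc prodN X N.N ((ℓ.smulRight (x₀, u) + LinearMap.prodMap 0 T : X × V →ₗ[ℝ] X × V) z)
      = ‖ℓ z • x₀‖₊ + N.N (ℓ z • u + T z.2) := by simp [prodN]
    _ ≤ ‖ℓ z‖₊ * prodN X N.N (x₀, u) + N.N (T z.2) := by
        rw [prodN, mul_add, add_assoc, nnnorm_smul, ENNReal.coe_mul, ← N.smul]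
        gcongr
        exact N.add_le _ _
    _ ≤ A * prodN X N.N z + C * prodN X N.N z :=
        add_le_add (hℓ z) ((hT z.2).trans (by gcongr; exact le_add_self))
    _ = (A + C) * prodN X N.N z := by ring

theorem isCoupleBounded_smulRight_add_prodMap (N₀ N₁ : CoupleNorm V) (ℓ : X × V →ₗ[ℝ] ℝ)
    (x₀ : X) (u : V) (T : V →ₗ[ℝ] V) {A C : ℝ≥0}
    (hℓ₀ : ∀ z, ‖ℓ z‖₊ * prodN X N₀.N (x₀, u) ≤ A * prodN X N₀.N z)
    (hℓ₁ : ∀ z, ‖ℓ z‖₊ * prodN X N₁.N (x₀, u) ≤ A * prodN X N₁.N z)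
    (hT : ∀ y, N₀.N (T y) ≤ C * N₀.N y ∧ N₁.N (T y) ≤ C * N₁.N y) :
    IsCoupleBounded (prodN X N₀.N) (prodN X N₁.N)
      (ℓ.smulRight (x₀, u) + LinearMap.prodMap 0 T : X × V →ₗ[ℝ] X × V) :=
  ⟨A + C, fun z => ⟨prodN_smulRight_add_prodMap_le N₀ ℓ x₀ u T hℓ₀ (fun y => (hT y).1) z,
    prodN_smulRight_add_prodMap_le N₁ ℓ x₀ u T hℓ₁ (fun y => (hT y).2) z⟩⟩

variable (N₀ N₁ : CoupleNorm V)

theorem exists_isCoupleBounded_of_fst_eq_zero (hCald : UniformCalderon N₀.N N₁.N)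
    {x₀ : X} {y₀ y₁ : V}
    (h : ∀ t > (0 : ℝ), ENNReal.ofReal (min 1 t) * ‖x₀‖₊ + Kfun N₀.N N₁.N t y₀ ≤
      Kfun N₀.N N₁.N t y₁) :
    ∃ S : X × V →ₗ[ℝ] X × V, S (0, y₁) = (x₀, y₀) ∧
      IsCoupleBounded (prodN X N₀.N) (prodN X N₁.N) S := by
  obtain ⟨C, hC⟩ := hCald
  obtain ⟨T, hTy, hT⟩ := hC y₁ y₀ fun t ht => le_add_self.trans (h t ht)
  obtain ⟨η, hηy₁, hη⟩ : ∃ η : Module.Dual ℝ V,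
      η y₁ • x₀ = x₀ ∧ ∀ y, ‖η y‖₊ * ‖x₀‖₊ ≤ Kfun N₀.N N₁.N 1 y := by
    rcases eq_or_ne x₀ 0 with rfl | hx₀
    · exact ⟨0, by simp, by simp⟩
    have hx₀K : (‖x₀‖₊ : ℝ≥0∞) ≤ Kfun N₀.N N₁.N 1 y₁ := by
      simpa using le_self_add.trans (h 1 one_pos)
    obtain ⟨η, hη1, hη⟩ := exists_dual_eq_one_of_eseminorm _ (Kfun_add_le N₀ N₁ 1)
      (Kfun_smul N₀ N₁ 1) (y₁ := y₁) ((lt_of_lt_of_le (by simpa using hx₀) hx₀K).ne')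
    exact ⟨η, by simp [hη1], fun y => le_trans (by gcongr) (hη y)⟩
  refine ⟨(η.comp (LinearMap.snd ℝ X V)).smulRight (x₀, 0) + LinearMap.prodMap 0 T,
    by simp [hηy₁, hTy], isCoupleBounded_smulRight_add_prodMap N₀ N₁ _ _ _ _ (A := 1) ?_ ?_ hT⟩
  · intro z
    simpa [prodN, N₀.N_zero] using (hη z.2).trans ((Kfun_le_left N₀ N₁ 1 z.2).trans le_add_self)
  · intro z
    simpa [prodN, N₁.N_zero] using
      (hη z.2).trans (((Kfun_le_right N₀ N₁ 1 z.2).trans_eq (by simp)).trans le_add_self)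

theorem exists_isCoupleBounded_of_fst_ne_zero (hCald : UniformCalderon N₀.N N₁.N) {γ : ℝ≥0}
    (hdiv : KDivisible N₀.N N₁.N γ) {x₀ x₁ : X} {y₀ y₁ : V} (hx₁ : x₁ ≠ 0)
    (h : ∀ t > (0 : ℝ), Kfun N₀.N N₁.N t y₀ ≤
      ENNReal.ofReal (min 1 t) * ‖x₁‖₊ + Kfun N₀.N N₁.N t y₁) :
    ∃ S : X × V →ₗ[ℝ] X × V, S (x₁, y₁) = (x₀, y₀) ∧
      IsCoupleBounded (prodN X N₀.N) (prodN X N₁.N) S := by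
  have hφ : EConcaveOn fun t => ENNReal.ofReal (min 1 t) * ‖x₁‖₊ := by
    simpa only [Kfun_nnnorm] using Kfun_concave (fun x : X => (‖x‖₊ : ℝ≥0∞)) (fun x => ‖x‖₊) x₁
  obtain ⟨u, v, rfl, hu, hv⟩ := hdiv y₀ _ _ hφ (Kfun_concave _ _ y₁) h
  obtain ⟨hu₀, hu₁⟩ := ne_top_of_forall_Kfun_le_min_mul hCald (c := γ * ‖x₁‖₊) (by finiteness)
    fun t ht => (hu t ht).trans_eq (mul_left_comm _ _ _)
  obtain ⟨C, hC⟩ := hCald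
  obtain ⟨T, hTv, hT⟩ := hC ((γ : ℝ) • y₁) v fun t ht => by simpa [Kfun_smul] using hv t ht
  obtain ⟨f, hfx₁, hf⟩ := exists_dual_eq_one_nnnorm_le (𝕜 := ℝ) hx₁
  set M := (prodN X N₀.N (x₀, u) + prodN X N₁.N (x₀, u)).toNNReal
  have hM : prodN X N₀.N (x₀, u) ≤ M ∧ prodN X N₁.N (x₀, u) ≤ M := by
    rw [ENNReal.coe_toNNReal (by simp [prodN, hu₀, hu₁])]
    exact ⟨le_self_add, le_add_self⟩
  have hℓ (N : CoupleNorm V) (hN : prodN X N.N (x₀, u) ≤ M) (z : X × V) :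
      ‖f z.1‖₊ * prodN X N.N (x₀, u) ≤ (‖x₁‖₊⁻¹ * M : ℝ≥0) * prodN X N.N z := by
    calc (‖f z.1‖₊ : ℝ≥0∞) * prodN X N.N (x₀, u) ≤ (‖x₁‖₊⁻¹ * ‖z.1‖₊ : ℝ≥0) * (M : ℝ≥0∞) := by
          gcongr
          exact_mod_cast hf z.1
      _ ≤ (‖x₁‖₊⁻¹ * M : ℝ≥0) * prodN X N.N z := by
          push_cast
          rw [mul_right_comm]
          gcongr
          exact le_self_add
  refine ⟨((f : X →ₗ[ℝ] ℝ).comp (LinearMap.fst ℝ X V)).smulRight (x₀, u) +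
    LinearMap.prodMap 0 ((γ : ℝ) • T), ?_,
    isCoupleBounded_smulRight_add_prodMap N₀ N₁ _ _ _ _ (C := γ * C) (hℓ N₀ hM.1) (hℓ N₁ hM.2)
      fun y => ?_⟩
  · simp [hfx₁, ← map_smul, hTv]
  · simp only [LinearMap.smul_apply, N₀.smul, N₁.smul, ENNReal.coe_mul,
      NNReal.nnnorm_eq, mul_assoc]
    exact ⟨by gcongr; exact (hT y).1, by gcongr; exact (hT y).2⟩

end DirectSum

theorem direct_sum_calderon_general
    (X : Type*) [NormedAddCommGroup X] [NormedSpace ℝ X]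
    (V : Type*) [AddCommGroup V] [Module ℝ V]
    (N₀ N₁ : CoupleNorm V)
    (hCald : UniformCalderon N₀.N N₁.N)
    (γ : ℝ≥0) (hdiv : KDivisible N₀.N N₁.N γ) :
    ∀ (x₀ x₁ : X) (y₀ y₁ : V),
      (∀ t > (0 : ℝ),
        Kfun (prodN X N₀.N) (prodN X N₁.N) t (x₀, y₀) ≤
          Kfun (prodN X N₀.N) (prodN X N₁.N) t (x₁, y₁)) →
      ∃ S : (X × V) →ₗ[ℝ] X × V, S (x₁, y₁) = (x₀, y₀) ∧
        ∃ C : ℝ≥0, ∀ z : X × V,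
          prodN X N₀.N (S z) ≤ (C : ℝ≥0∞) * prodN X N₀.N z ∧
          prodN X N₁.N (S z) ≤ (C : ℝ≥0∞) * prodN X N₁.N z := by
  intro x₀ x₁ y₀ y₁ hK
  simp only [Kfun_prodN, Kfun_nnnorm] at hK
  rcases eq_or_ne x₁ 0 with rfl | hx₁
  · exact exists_isCoupleBounded_of_fst_eq_zero N₀ N₁ hCald fun t ht => by simpa using hK t ht
  · exact exists_isCoupleBounded_of_fst_ne_zero N₀ N₁ hCald hdiv hx₁
      fun t ht => le_add_self.trans (hK t ht)

/-- If `(Y₀, Y₁)` is a uniform Calderón couple which is Gagliardo complete (so that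
K-divisibility holds with constant `γ`) and `X` is a Banach space, then
`(X ⊕₁ Y₀, X ⊕₁ Y₁)` is a Calderón couple. -/
theorem direct_sum_calderon
    (X : Type*) [NormedAddCommGroup X] [NormedSpace ℝ X] [CompleteSpace X]
    (V : Type*) [AddCommGroup V] [Module ℝ V]
    (N₀ N₁ : CoupleNorm V)
    (hCald : UniformCalderon N₀.N N₁.N)
    (γ : ℝ≥0) (hγ : 1 ≤ γ) (hdiv : KDivisible N₀.N N₁.N γ) :
    ∀ (x₀ x₁ : X) (y₀ y₁ : V),
      (∀ t > (0 : ℝ),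
        Kfun (prodN X N₀.N) (prodN X N₁.N) t (x₀, y₀) ≤
          Kfun (prodN X N₀.N) (prodN X N₁.N) t (x₁, y₁)) →
      ∃ S : (X × V) →ₗ[ℝ] X × V, S (x₁, y₁) = (x₀, y₀) ∧
        ∃ C : ℝ≥0, ∀ z : X × V,
          prodN X N₀.N (S z) ≤ (C : ℝ≥0∞) * prodN X N₀.N z ∧
          prodN X N₁.N (S z) ≤ (C : ℝ≥0∞) * prodN X N₁.N z :=
  direct_sum_calderon_general X V N₀ N₁ hCald γ hdiv
end

section
/- Let F(x) = exp(f(log x)) where f: ℝ → ℝ is convex, f(x) − x is increasing, and F satisfies the Δ₂-condition. Then F is elastic at infinity: there exist C > 1 and a bounded increasing function w on [1,∞) such that F(tx)/F(t) ≤ C·F(sx)/F(s) + w(t) − w(s) for all 1 ≤ s ≤ t and 0 < x ≤ 1. -/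
/-!
Writing `u = log t` and `h = log x ≤ 0`, the ratio `F(tx)/F(t)` equals `exp (f (u + h) - f u)`.
For convex `f` the increment of `f` over an interval of fixed length grows with the position of
the interval, so this ratio is antitone in `t`; hence the elasticity inequality already holds
with `C = 2` and `w = 0`.
-/

open Set Real

theorem ConvexOn.increment_mono {𝕜 : Type*} [Field 𝕜] [LinearOrder 𝕜] [IsStrictOrderedRing 𝕜]
    {s : Set 𝕜} {f : 𝕜 → 𝕜} (hf : ConvexOn 𝕜 s f) {u v h : 𝕜} (hu : u ∈ s) (huh : u + h ∈ s)
    (hv : v ∈ s) (hvh : v + h ∈ s) (huv : u ≤ v) (hh : 0 ≤ h) :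
    f (u + h) - f u ≤ f (v + h) - f v := by
  rcases hh.eq_or_lt with rfl | hh
  · simp
  have hleft : (f (u + h) - f u) / h ≤ (f (v + h) - f u) / (v + h - u) := by
    simpa using hf.secant_mono hu huh hvh (by linarith) (by linarith) (by linarith)
  have hright : (f u - f (v + h)) / (u - (v + h)) ≤ (f v - f (v + h)) / (v - (v + h)) :=
    hf.secant_mono hvh hu hv (by linarith) (by linarith) huv
  rw [← neg_sub (f (v + h)), ← neg_sub (v + h), neg_div_neg_eq, ← neg_sub (f (v + h)) (f v),
    show v - (v + h) = -h by ring, neg_div_neg_eq] at hright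
  exact (div_le_div_iff_of_pos_right hh).mp (hleft.trans hright)

theorem antitoneOn_ratio_of_exp_convex {f F : ℝ → ℝ} (hf : ConvexOn ℝ univ f)
    (hF : ∀ x > (0 : ℝ), F x = exp (f (log x))) {x : ℝ} (hx : 0 < x) (hx1 : x ≤ 1) :
    AntitoneOn (fun t => F (t * x) / F t) (Ioi 0) := by
  intro s (hs : 0 < s) t (ht : 0 < t) hst
  have hlog : log s ≤ log t := log_le_log hs hst
  have hlogx : log x ≤ 0 := log_nonpos hx.le hx1
  have hincr : f (log t + log x) - f (log t) ≤ f (log s + log x) - f (log s) := by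
    have := hf.increment_mono (u := log s + log x) (v := log t + log x) (h := -log x)
      trivial trivial trivial trivial (by linarith) (by linarith)
    simp only [add_neg_cancel_right] at this
    linarith
  simp only [hF _ hs, hF _ ht, hF _ (mul_pos hs hx), hF _ (mul_pos ht hx),
    log_mul hs.ne' hx.ne', log_mul ht.ne' hx.ne', ← exp_sub]
  exact exp_le_exp.mpr hincr

theorem elastic_of_exp_convex_general
    (f : ℝ → ℝ) (hconv : ConvexOn ℝ Set.univ f)
    (F : ℝ → ℝ) (hF : ∀ x > (0 : ℝ), F x = Real.exp (f (Real.log x))) :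
    ∃ C > (1 : ℝ), ∃ w : ℝ → ℝ, MonotoneOn w (Ici 1) ∧ BddAbove (w '' Ici 1) ∧
      ∀ s t x : ℝ, 1 ≤ s → s ≤ t → 0 < x → x ≤ 1 →
        F (t * x) / F t ≤ C * (F (s * x) / F s) + w t - w s := by
  refine ⟨2, one_lt_two, fun _ => 0, monotoneOn_const, by simp, fun s t x hs hst hx hx1 => ?_⟩
  have hs0 : 0 < s := one_pos.trans_le hs
  have hratio_pos : 0 < F (s * x) / F s := by
    rw [hF _ hs0, hF _ (mul_pos hs0 hx)]
    positivity
  have hanti := antitoneOn_ratio_of_exp_convex hconv hF hx hx1 hs0 (hs0.trans_le hst) hst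
  simp only at hanti
  linarith

/-- If `F(x) = exp(f(log x))` with `f` convex, `f(x) − x` increasing, and `F`
satisfying the Δ₂-condition, then `F` is elastic at infinity: there are `C > 1`
and a bounded increasing weight `w` on `[1,∞)` with
`F(tx)/F(t) ≤ C F(sx)/F(s) + w(t) − w(s)` for `1 ≤ s ≤ t`, `0 < x ≤ 1`. -/
theorem elastic_of_exp_convex
    (f : ℝ → ℝ) (hconv : ConvexOn ℝ Set.univ f)
    (hinc : Monotone fun x => f x - x)
    (F : ℝ → ℝ) (hF : ∀ x > (0 : ℝ), F x = Real.exp (f (Real.log x)))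
    (hF0 : F 0 = 0)
    (Δ : ℝ) (hΔ : ∀ x ≥ (0 : ℝ), F (2 * x) ≤ Δ * F x) :
    ∃ C > (1 : ℝ), ∃ w : ℝ → ℝ, MonotoneOn w (Ici 1) ∧ BddAbove (w '' Ici 1) ∧
      ∀ s t x : ℝ, 1 ≤ s → s ≤ t → 0 < x → x ≤ 1 →
        F (t * x) / F t ≤ C * (F (s * x) / F s) + w t - w s :=
  elastic_of_exp_convex_general f hconv F hF
end
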